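/- arXiv:1812.11364 — 9 statements merged into one kernel-verified Lean document; each statement's English description precedes it below -/
import Mathlib

section
/- Fix b ∈ ℝ, μ > 0 and σ_b > 0. Let g ∈ L¹(ℝ, ℂ) with Fourier transform ĝ, and set ψ̂(ξ) = conj(ĝ(σ_b(μ − ξ))). Let X ∈ L¹(ℝ, ℂ) vanish a.e. on (−∞, 0], and let x(b) = ∫₀^∞ X(ξ) e^{2πibξ} dξ (an analytic signal evaluated at b). Assume ∫₀^∞ |ψ̂(ξ)|/ξ dξ < ∞, and define c_ψ(b) = ∫₀^∞ conj(ψ̂(ξ)) ξ⁻¹ dξ and, for a > 0, the adaptive CWT in frequency form W̃(a) = ∫₀^∞ X(ξ) conj(ψ̂(aξ)) e^{2πibξ} dξ. Then ∫₀^∞ W̃(a) a⁻¹ da = c_ψ(b) · x(b). -/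
/-!
The measure `da / a` on `(0, ∞)` is invariant under dilations, so
`∫₀^∞ conj ψ̂(a ξ) da / a = c_ψ` for every `ξ > 0`. The admissibility condition makes
`(a, ξ) ↦ X(ξ) conj ψ̂(a ξ) e^{2πibξ} / a` absolutely integrable on `(0, ∞)²` (its inner
`a`-integral of norms is `‖X(ξ)‖ ∫₀^∞ |ψ̂(u)| du / u`), so by Fubini we may integrate in `a`
first, which leaves `c_ψ ∫₀^∞ X(ξ) e^{2πibξ} dξ = c_ψ x(b)`. Joint measurability comes from the
continuity of `ψ̂`, the Fourier transform of an `L¹` function.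
-/

open MeasureTheory Real Set FourierTransform

theorem fourier_eq_integral_mul_cexp (g : ℝ → ℂ) (ξ : ℝ) :
    𝓕 g ξ = ∫ t, g t * Complex.exp (-2 * π * Complex.I * ξ * t) := by
  rw [Real.fourier_real_eq_integral_exp_smul]
  congr 1 with t
  rw [smul_eq_mul, mul_comm]
  push_cast
  ring_nf

theorem continuous_fourier_of_integrable {E : Type*} [NormedAddCommGroup E] [NormedSpace ℂ E]
    {g : ℝ → E} (hg : Integrable g) : Continuous (𝓕 g) :=
  VectorFourier.fourierIntegral_continuous Real.continuous_fourierChar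
    (innerSL ℝ).continuous₂ hg

section ScaleInvariance

variable {E : Type*} [NormedAddCommGroup E] [NormedSpace ℝ E]

theorem integral_Ioi_inv_smul_comp_mul_right (φ : ℝ → E) {ξ : ℝ} (hξ : 0 < ξ) :
    ∫ a in Ioi 0, a⁻¹ • φ (a * ξ) = ∫ u in Ioi 0, u⁻¹ • φ u := by
  have h := integral_comp_mul_right_Ioi (fun u => u⁻¹ • φ u) 0 hξ
  simp only [zero_mul, mul_inv, mul_comm _ ξ⁻¹, mul_smul, integral_smul] at h
  exact smul_right_injective E (inv_ne_zero hξ.ne') h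

theorem integrableOn_Ioi_inv_smul_comp_mul_right_iff (φ : ℝ → E) {ξ : ℝ} (hξ : 0 < ξ) :
    IntegrableOn (fun a => a⁻¹ • φ (a * ξ)) (Ioi 0) ↔
      IntegrableOn (fun u => u⁻¹ • φ u) (Ioi 0) := by
  have h := integrableOn_Ioi_comp_mul_right_iff (fun u => u⁻¹ • φ u) 0 hξ
  simp only [zero_mul, mul_inv, mul_comm _ ξ⁻¹, mul_smul] at h
  rw [← h]
  exact (integrable_smul_iff (inv_ne_zero hξ.ne') _).symm

theorem integral_Ioi_norm_inv_smul_comp_mul_right (φ : ℝ → E) {ξ : ℝ} (hξ : 0 < ξ) :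
    ∫ a in Ioi 0, ‖a⁻¹ • φ (a * ξ)‖ = ∫ u in Ioi 0, ‖u⁻¹ • φ u‖ := by
  have hnorm : ∀ φ : ℝ → E, EqOn (fun a => ‖a⁻¹ • φ a‖) (fun a => a⁻¹ • ‖φ a‖) (Ioi 0) :=
    fun φ a (ha : 0 < a) => by simp [norm_smul, abs_of_pos ha]
  rw [setIntegral_congr_fun measurableSet_Ioi (hnorm fun a => φ (a * ξ)),
    setIntegral_congr_fun measurableSet_Ioi (hnorm φ)]
  exact integral_Ioi_inv_smul_comp_mul_right (fun u => ‖φ u‖) hξ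

end ScaleInvariance

theorem integral_Ioi_inv_smul_integral_Ioi_smul_comp_mul
    {E : Type*} [NormedAddCommGroup E] [NormedSpace ℂ E] [CompleteSpace E]
    {h : ℝ → ℂ} {φ : ℝ → E} (hh : IntegrableOn h (Ioi 0)) (hφm : StronglyMeasurable φ)
    (hφ : IntegrableOn (fun u => u⁻¹ • φ u) (Ioi 0)) :
    ∫ a in Ioi 0, a⁻¹ • ∫ ξ in Ioi 0, h ξ • φ (a * ξ) =
      (∫ ξ in Ioi 0, h ξ) • ∫ u in Ioi 0, u⁻¹ • φ u := by
  set ν := volume.restrict (Ioi (0 : ℝ))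
  set F : ℝ → ℝ → E := fun a ξ => h ξ • a⁻¹ • φ (a * ξ)
  have hF_meas : AEStronglyMeasurable (Function.uncurry F) (ν.prod ν) :=
    hh.1.comp_snd.smul <|
      (measurable_fst.inv.stronglyMeasurable.smul
        (hφm.comp_measurable (measurable_fst.mul measurable_snd))).aestronglyMeasurable
  have hF_int : Integrable (Function.uncurry F) (ν.prod ν) := by
    refine (integrable_prod_iff' hF_meas).2 ⟨?_, ?_⟩
    · filter_upwards [ae_restrict_mem measurableSet_Ioi] with ξ hξ
      exact ((integrableOn_Ioi_inv_smul_comp_mul_right_iff φ hξ).2 hφ).smul (h ξ)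
    · refine (hh.norm.mul_const (∫ u in Ioi 0, ‖u⁻¹ • φ u‖)).congr ?_
      filter_upwards [ae_restrict_mem measurableSet_Ioi] with ξ hξ
      simp only [F, Function.uncurry_apply_pair, norm_smul (h _), integral_const_mul]
      exact congrArg _ (integral_Ioi_norm_inv_smul_comp_mul_right φ hξ).symm
  calc ∫ a in Ioi 0, a⁻¹ • ∫ ξ in Ioi 0, h ξ • φ (a * ξ)
      = ∫ a, ∫ ξ, F a ξ ∂ν ∂ν := by
        congr 1 with a
        rw [← integral_smul]
        simp only [F, smul_comm a⁻¹ (h _)]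
        rfl
    _ = ∫ ξ, ∫ a, F a ξ ∂ν ∂ν := integral_integral_swap hF_int
    _ = ∫ ξ, h ξ • (∫ u in Ioi 0, u⁻¹ • φ u) ∂ν := by
        refine integral_congr_ae ?_
        filter_upwards [ae_restrict_mem measurableSet_Ioi] with ξ hξ
        simp only [F, integral_smul]
        exact congrArg _ (integral_Ioi_inv_smul_comp_mul_right φ hξ)
    _ = _ := integral_smul_const _ _

theorem adaptive_cwt_recovery_analytic_general
    (b μ σb : ℝ)
    (g : ℝ → ℂ) (hg : Integrable g)
    (ghat : ℝ → ℂ)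
    (hghat : ∀ ξ : ℝ, ghat ξ = ∫ t : ℝ, g t * Complex.exp (-2 * π * Complex.I * ξ * t))
    (ψhat : ℝ → ℂ)
    (hψhat : ∀ ξ : ℝ, ψhat ξ = starRingEnd ℂ (ghat (σb * (μ - ξ))))
    (X : ℝ → ℂ) (hX : Integrable X)
    (xb : ℂ)
    (hxb : xb = ∫ ξ in Set.Ioi (0 : ℝ), X ξ * Complex.exp (2 * π * Complex.I * b * ξ))
    (hadm : IntegrableOn (fun ξ : ℝ => ‖ψhat ξ‖ / ξ) (Set.Ioi (0 : ℝ)))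
    (cψ : ℂ)
    (hcψ : cψ = ∫ ξ in Set.Ioi (0 : ℝ), starRingEnd ℂ (ψhat ξ) * (ξ : ℂ)⁻¹)
    (W : ℝ → ℂ)
    (hW : ∀ a : ℝ, W a =
      ∫ ξ in Set.Ioi (0 : ℝ), X ξ * starRingEnd ℂ (ψhat (a * ξ)) * Complex.exp (2 * π * Complex.I * b * ξ)) :
    ∫ a in Set.Ioi (0 : ℝ), W a * (a : ℂ)⁻¹ = cψ * xb := by
  have hghat_eq : ghat = 𝓕 g :=
    funext fun ξ => (hghat ξ).trans (fourier_eq_integral_mul_cexp g ξ).symm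
  have hψ_cont : Continuous ψhat := by
    rw [funext hψhat, hghat_eq]
    exact Complex.continuous_conj.comp ((continuous_fourier_of_integrable hg).comp (by fun_prop))
  set φ : ℝ → ℂ := fun u => starRingEnd ℂ (ψhat u)
  have hφ_meas : StronglyMeasurable φ := (Complex.continuous_conj.comp hψ_cont).stronglyMeasurable
  set h : ℝ → ℂ := fun ξ => X ξ * Complex.exp (2 * π * Complex.I * b * ξ)
  have hφ_int : IntegrableOn (fun u => u⁻¹ • φ u) (Ioi 0) := by
    refine hadm.congr' (by fun_prop) ?_
    filter_upwards [ae_restrict_mem measurableSet_Ioi] with u (hu : 0 < u)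
    simp [φ, abs_of_pos hu, div_eq_inv_mul]
  have hh_int : IntegrableOn h (Ioi 0) :=
    hX.integrableOn.mul_bdd (by fun_prop) (c := 1)
      (ae_of_all _ fun ξ => by simp [Complex.norm_exp])
  have hW_eq : ∀ a, W a * (a : ℂ)⁻¹ = a⁻¹ • ∫ ξ in Ioi 0, h ξ • φ (a * ξ) := by
    intro a
    rw [hW, Complex.real_smul, Complex.ofReal_inv, mul_comm]
    congr 1
    congr 1 with ξ
    simp only [h, φ, smul_eq_mul]
    ring
  have hcψ_eq : cψ = ∫ u in Ioi 0, u⁻¹ • φ u := by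
    simp only [hcψ, φ, Complex.real_smul, Complex.ofReal_inv, mul_comm]
  simp only [hW_eq]
  rw [integral_Ioi_inv_smul_integral_Ioi_smul_comp_mul hh_int hφ_meas hφ_int,
    hcψ_eq, hxb, smul_eq_mul, mul_comm]

/-- Recovery of an analytic signal from its adaptive CWT:
`∫₀^∞ W̃(a)/a da = c_ψ(b) · x(b)`. -/
theorem adaptive_cwt_recovery_analytic
    (b μ σb : ℝ) (hμ : 0 < μ) (hσb : 0 < σb)
    (g : ℝ → ℂ) (hg : Integrable g)
    (ghat : ℝ → ℂ)
    (hghat : ∀ ξ : ℝ, ghat ξ = ∫ t : ℝ, g t * Complex.exp (-2 * π * Complex.I * ξ * t))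
    (ψhat : ℝ → ℂ)
    (hψhat : ∀ ξ : ℝ, ψhat ξ = starRingEnd ℂ (ghat (σb * (μ - ξ))))
    (X : ℝ → ℂ) (hX : Integrable X)
    (hXsupp : ∀ᵐ ξ : ℝ, ξ ≤ 0 → X ξ = 0)
    (xb : ℂ)
    (hxb : xb = ∫ ξ in Set.Ioi (0 : ℝ), X ξ * Complex.exp (2 * π * Complex.I * b * ξ))
    (hadm : IntegrableOn (fun ξ : ℝ => ‖ψhat ξ‖ / ξ) (Set.Ioi (0 : ℝ)))
    (cψ : ℂ)
    (hcψ : cψ = ∫ ξ in Set.Ioi (0 : ℝ), starRingEnd ℂ (ψhat ξ) * (ξ : ℂ)⁻¹)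
    (W : ℝ → ℂ)
    (hW : ∀ a : ℝ, W a =
      ∫ ξ in Set.Ioi (0 : ℝ), X ξ * starRingEnd ℂ (ψhat (a * ξ)) * Complex.exp (2 * π * Complex.I * b * ξ)) :
    ∫ a in Set.Ioi (0 : ℝ), W a * (a : ℂ)⁻¹ = cψ * xb :=
  adaptive_cwt_recovery_analytic_general b μ σb g hg ghat hghat ψhat hψhat X hX xb hxb hadm cψ hcψ W
    hW
end

section
/- Fix b ∈ ℝ, μ > 0 and σ_b > 0. Let g ∈ L¹(ℝ, ℂ) with Fourier transform ĝ, and set ψ̂(ξ) = conj(ĝ(σ_b(μ − ξ))). Let X ∈ L¹(ℝ, ℂ) satisfy conj(X(ξ)) = X(−ξ) for a.e. ξ (so x(b) = ∫_ℝ X(ξ) e^{2πibξ} dξ is real-valued). Assume ∫₀^∞ |ψ̂(ξ)|/ξ dξ < ∞, let c_ψ(b) = ∫₀^∞ conj(ψ̂(ξ)) ξ⁻¹ dξ be nonzero, and for a > 0 define W̃(a) = ∫₀^∞ X(ξ) conj(ψ̂(aξ)) e^{2πibξ} dξ (the adaptive CWT of x with an analytic wavelet, which only sees positive frequencies). Then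 x(b) = Re( (2/c_ψ(b)) ∫₀^∞ W̃(a) a⁻¹ da ). -/
/-!
Integrating the wavelet coefficients against the dilation-invariant measure `da / a` and
exchanging the integrals (Fubini), the substitution `u = a ξ` turns the inner integral into `c_ψ`,
so `∫₀^∞ W̃(a) da / a = c_ψ ∫₀^∞ X(ξ) e^{2πibξ} dξ`. For a real signal the negative frequencies
contribute the complex conjugate of the positive ones, hence `x(b)` is twice the real part of the
positive-frequency integral.
-/

open MeasureTheory Real

open Set ComplexConjugate FourierTransform

section Dilation

variable {𝕜 : Type*} [RCLike 𝕜]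

theorem integral_Ioi_comp_mul_right_mul_inv (F : ℝ → 𝕜) {ξ : ℝ} (hξ : 0 < ξ) :
    ∫ a in Ioi 0, F (a * ξ) * (a : 𝕜)⁻¹ = ∫ u in Ioi 0, F u * (u : 𝕜)⁻¹ := by
  have hξ' : (ξ : 𝕜) ≠ 0 := RCLike.ofReal_ne_zero.2 hξ.ne'
  have h : ∀ a : ℝ, F (a * ξ) * (a : 𝕜)⁻¹ = ξ * (F (a * ξ) * ((a * ξ : ℝ) : 𝕜)⁻¹) := fun a => by
    rw [RCLike.ofReal_mul, mul_inv]
    linear_combination (-(F (a * ξ) * (a : 𝕜)⁻¹)) * mul_inv_cancel₀ hξ'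
  simp_rw [h]
  rw [integral_const_mul, integral_comp_mul_right_Ioi (fun u => F u * (u : 𝕜)⁻¹) 0 hξ, zero_mul,
    RCLike.real_smul_eq_coe_mul, ← mul_assoc, RCLike.ofReal_inv, mul_inv_cancel₀ hξ', one_mul]

theorem integral_Ioi_norm_comp_mul_right_mul_inv (F : ℝ → 𝕜) {ξ : ℝ} (hξ : 0 < ξ) :
    ∫ a in Ioi 0, ‖F (a * ξ) * (a : 𝕜)⁻¹‖ = ∫ u in Ioi 0, ‖F u * (u : 𝕜)⁻¹‖ := by
  have h : ∀ (G : ℝ → 𝕜), ∀ u ∈ Ioi (0 : ℝ), ‖G u * (u : 𝕜)⁻¹‖ = ‖G u‖ * u⁻¹ := fun G u hu => by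
    rw [norm_mul, norm_inv, RCLike.norm_ofReal, abs_of_pos hu]
  rw [setIntegral_congr_fun measurableSet_Ioi (h _), setIntegral_congr_fun measurableSet_Ioi (h _)]
  simpa using integral_Ioi_comp_mul_right_mul_inv (fun u => ‖F u‖) hξ

theorem MeasureTheory.IntegrableOn.comp_mul_right_mul_inv_Ioi {F : ℝ → 𝕜}
    (hF : IntegrableOn (fun u => F u * (u : 𝕜)⁻¹) (Ioi 0)) {ξ : ℝ} (hξ : 0 < ξ) :
    IntegrableOn (fun a => F (a * ξ) * (a : 𝕜)⁻¹) (Ioi 0) := by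
  have hξ' : (ξ : 𝕜) ≠ 0 := RCLike.ofReal_ne_zero.2 hξ.ne'
  have h : IntegrableOn (fun a => F (a * ξ) * ((a * ξ : ℝ) : 𝕜)⁻¹) (Ioi 0) :=
    (integrableOn_Ioi_comp_mul_right_iff (fun u => F u * (u : 𝕜)⁻¹) 0 hξ).2 (by rwa [zero_mul])
  refine IntegrableOn.congr_fun (h.const_mul (ξ : 𝕜)) (fun a _ => ?_) measurableSet_Ioi
  simp only [RCLike.ofReal_mul, mul_inv]
  linear_combination (F (a * ξ) * (a : 𝕜)⁻¹) * mul_inv_cancel₀ hξ'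

theorem integrable_mul_comp_mul_mul_inv_Ioi_prod {f F : ℝ → 𝕜} (hf : IntegrableOn f (Ioi 0))
    (hFm : Measurable F) (hF : IntegrableOn (fun u => F u * (u : 𝕜)⁻¹) (Ioi 0)) :
    Integrable (fun p : ℝ × ℝ => f p.1 * (F (p.2 * p.1) * (p.2 : 𝕜)⁻¹))
      ((volume.restrict (Ioi 0)).prod (volume.restrict (Ioi 0))) := by
  have hmeas : AEStronglyMeasurable (fun p : ℝ × ℝ => f p.1 * (F (p.2 * p.1) * (p.2 : 𝕜)⁻¹))
      ((volume.restrict (Ioi 0)).prod (volume.restrict (Ioi 0))) :=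
    hf.aestronglyMeasurable.comp_fst.fun_mul
      (Measurable.aestronglyMeasurable (f := fun p : ℝ × ℝ => F (p.2 * p.1) * (p.2 : 𝕜)⁻¹)
        (by fun_prop))
  refine (integrable_prod_iff hmeas).2 ⟨?_, ?_⟩
  · filter_upwards [ae_restrict_mem measurableSet_Ioi] with ξ (hξ : 0 < ξ)
    exact (hF.comp_mul_right_mul_inv_Ioi hξ).const_mul (f ξ)
  · refine IntegrableOn.congr_fun (hf.norm.mul_const (∫ u in Ioi 0, ‖F u * (u : 𝕜)⁻¹‖))
      (fun ξ hξ => ?_) measurableSet_Ioi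
    simp only [norm_mul (f ξ), integral_const_mul]
    rw [integral_Ioi_norm_comp_mul_right_mul_inv F hξ]

theorem integral_Ioi_integral_mul_comp_mul_mul_inv {f F : ℝ → 𝕜} (hf : IntegrableOn f (Ioi 0))
    (hFm : Measurable F) (hF : IntegrableOn (fun u => F u * (u : 𝕜)⁻¹) (Ioi 0)) :
    ∫ a in Ioi 0, (∫ ξ in Ioi 0, f ξ * F (a * ξ)) * (a : 𝕜)⁻¹ =
      (∫ ξ in Ioi 0, f ξ) * ∫ u in Ioi 0, F u * (u : 𝕜)⁻¹ := by
  have inner : ∀ ξ ∈ Ioi (0 : ℝ), ∫ a in Ioi 0, f ξ * (F (a * ξ) * (a : 𝕜)⁻¹) =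
      f ξ * ∫ u in Ioi 0, F u * (u : 𝕜)⁻¹ := fun ξ hξ => by
    rw [integral_const_mul, integral_Ioi_comp_mul_right_mul_inv F hξ]
  simp_rw [← integral_mul_const, mul_assoc]
  rw [← integral_integral_swap (integrable_mul_comp_mul_mul_inv_Ioi_prod hf hFm hF),
    setIntegral_congr_fun measurableSet_Ioi inner, integral_mul_const]

end Dilation

theorem integral_eq_two_mul_re_setIntegral_Ioi {f : ℝ → ℂ} (hf : Integrable f)
    (hsym : ∀ᵐ ξ, conj (f ξ) = f (-ξ)) :
    ∫ ξ, f ξ = ((2 * (∫ ξ in Ioi 0, f ξ).re : ℝ) : ℂ) := by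
  have hneg : ∫ ξ in Iic 0, f ξ = conj (∫ ξ in Ioi 0, f ξ) := by
    rw [← neg_zero, ← integral_comp_neg_Ioi, neg_zero, ← integral_conj]
    exact integral_congr_ae ((ae_restrict_of_ae hsym).mono fun ξ hξ => hξ.symm)
  rw [← intervalIntegral.integral_Iic_add_Ioi hf.integrableOn hf.integrableOn, hneg,
    add_comm, Complex.add_conj]

theorem continuous_integral_mul_cexp {g : ℝ → ℂ} (hg : Integrable g) :
    Continuous fun ξ : ℝ => ∫ t, g t * Complex.exp (-2 * π * Complex.I * ξ * t) := by
  have h : (fun ξ : ℝ => ∫ t, g t * Complex.exp (-2 * π * Complex.I * ξ * t)) = 𝓕 g := by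
    ext ξ
    rw [Real.fourier_real_eq_integral_exp_smul]
    congr with t
    rw [smul_eq_mul, mul_comm]
    push_cast
    ring_nf
  rw [h]
  exact VectorFourier.fourierIntegral_continuous Real.continuous_fourierChar
    (innerSL ℝ).continuous₂ hg

theorem adaptive_cwt_recovery_real_general
    (b μ σb : ℝ)
    (g : ℝ → ℂ) (hg : Integrable g)
    (ghat : ℝ → ℂ)
    (hghat : ∀ ξ : ℝ, ghat ξ = ∫ t : ℝ, g t * Complex.exp (-2 * π * Complex.I * ξ * t))
    (ψhat : ℝ → ℂ)
    (hψhat : ∀ ξ : ℝ, ψhat ξ = starRingEnd ℂ (ghat (σb * (μ - ξ))))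
    (X : ℝ → ℂ) (hX : Integrable X)
    (hXsym : ∀ᵐ ξ : ℝ, starRingEnd ℂ (X ξ) = X (-ξ))
    (xb : ℂ)
    (hxb : xb = ∫ ξ : ℝ, X ξ * Complex.exp (2 * π * Complex.I * b * ξ))
    (hadm : IntegrableOn (fun ξ : ℝ => ‖ψhat ξ‖ / ξ) (Set.Ioi (0 : ℝ)))
    (cψ : ℂ)
    (hcψ : cψ = ∫ ξ in Set.Ioi (0 : ℝ), starRingEnd ℂ (ψhat ξ) * (ξ : ℂ)⁻¹)
    (hcψ0 : cψ ≠ 0)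
    (W : ℝ → ℂ)
    (hW : ∀ a : ℝ, W a =
      ∫ ξ in Set.Ioi (0 : ℝ), X ξ * starRingEnd ℂ (ψhat (a * ξ)) * Complex.exp (2 * π * Complex.I * b * ξ)) :
    xb = ((2 / cψ * ∫ a in Set.Ioi (0 : ℝ), W a * (a : ℂ)⁻¹).re : ℝ) := by
  set e : ℝ → ℂ := fun ξ => Complex.exp (2 * π * Complex.I * b * ξ) with he
  have hψ : Continuous ψhat := by
    have hghat_cont : Continuous ghat := funext hghat ▸ continuous_integral_mul_cexp hg
    rw [funext hψhat]
    fun_prop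
  have hconjψ : IntegrableOn (fun u : ℝ => conj (ψhat u) * (u : ℂ)⁻¹) (Ioi 0) := by
    refine hadm.mono' (Measurable.aestronglyMeasurable (by fun_prop)) ?_
    filter_upwards [ae_restrict_mem measurableSet_Ioi] with u (hu : 0 < u)
    rw [norm_mul, Complex.norm_conj, norm_inv, Complex.norm_real, norm_of_nonneg hu.le,
      div_eq_mul_inv]
  have hXe : Integrable fun ξ => X ξ * e ξ :=
    hX.mul_bdd (c := 1) (Measurable.aestronglyMeasurable (by fun_prop))
      (.of_forall fun ξ => by simp [he, Complex.norm_exp])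
  have hXe_sym : ∀ᵐ ξ : ℝ, conj (X ξ * e ξ) = X (-ξ) * e (-ξ) := by
    filter_upwards [hXsym] with ξ hξ
    rw [map_mul, hξ, he, ← Complex.exp_conj]
    congr 2
    simp only [map_mul, Complex.conj_I, Complex.conj_ofReal, map_ofNat]
    push_cast
    ring
  have hcwt : ∫ a in Ioi 0, W a * (a : ℂ)⁻¹ = (∫ ξ in Ioi 0, X ξ * e ξ) * cψ := by
    simp_rw [hW, mul_right_comm (X _), hcψ]
    exact integral_Ioi_integral_mul_comp_mul_mul_inv hXe.integrableOn
      (Complex.continuous_conj.comp hψ).measurable hconjψ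
  rw [hxb, integral_eq_two_mul_re_setIntegral_Ioi hXe hXe_sym, hcwt, div_mul_eq_mul_div,
    mul_div_assoc, mul_div_cancel_right₀ _ hcψ0]
  simp

/-- Recovery of a real-valued signal from its adaptive CWT with an analytic wavelet:
`x(b) = Re( (2/c_ψ(b)) ∫₀^∞ W̃(a)/a da )`. -/
theorem adaptive_cwt_recovery_real
    (b μ σb : ℝ) (hμ : 0 < μ) (hσb : 0 < σb)
    (g : ℝ → ℂ) (hg : Integrable g)
    (ghat : ℝ → ℂ)
    (hghat : ∀ ξ : ℝ, ghat ξ = ∫ t : ℝ, g t * Complex.exp (-2 * π * Complex.I * ξ * t))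
    (ψhat : ℝ → ℂ)
    (hψhat : ∀ ξ : ℝ, ψhat ξ = starRingEnd ℂ (ghat (σb * (μ - ξ))))
    (X : ℝ → ℂ) (hX : Integrable X)
    (hXsym : ∀ᵐ ξ : ℝ, starRingEnd ℂ (X ξ) = X (-ξ))
    (xb : ℂ)
    (hxb : xb = ∫ ξ : ℝ, X ξ * Complex.exp (2 * π * Complex.I * b * ξ))
    (hadm : IntegrableOn (fun ξ : ℝ => ‖ψhat ξ‖ / ξ) (Set.Ioi (0 : ℝ)))
    (cψ : ℂ)
    (hcψ : cψ = ∫ ξ in Set.Ioi (0 : ℝ), starRingEnd ℂ (ψhat ξ) * (ξ : ℂ)⁻¹)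
    (hcψ0 : cψ ≠ 0)
    (W : ℝ → ℂ)
    (hW : ∀ a : ℝ, W a =
      ∫ ξ in Set.Ioi (0 : ℝ), X ξ * starRingEnd ℂ (ψhat (a * ξ)) * Complex.exp (2 * π * Complex.I * b * ξ)) :
    xb = ((2 / cψ * ∫ a in Set.Ioi (0 : ℝ), W a * (a : ℂ)⁻¹).re : ℝ) :=
  adaptive_cwt_recovery_real_general b μ σb g hg ghat hghat ψhat hψhat X hX hXsym xb hxb hadm cψ hcψ
    hcψ0 W hW
end

section
/- Let A ∈ ℂ, c, r, b, μ ∈ ℝ and a, σ > 0, and let s(t) = A e^{2πi(ct + (r/2)t²)} be a linear chirp. Then the CWT of s with the simplified Morlet wavelet, W_s(a, b) = ∫_ℝ s(b + aτ) (1/(σ√(2π))) e^{−τ²/(2σ²)} e^{−2πiμτ} dτ, equals (A / √(1 − 2πiσ²a²r)) · e^{2πi(cb + (r/2)b²)} · exp( −(2π²(aσ)² / (1 + (2πr a²σ²)²)) · (c + rb − μ/a)² · (1 + 2πi a²σ² r) ), where the square root is the principal complex square root. -/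
/-!
Along `t = b + aτ` the chirp phase is quadratic in `τ`, so the integrand is the complex Gaussian
`exp (-w τ² / (2σ²) + 2πiντ)` with `w = 1 - 2πiσ²a²r` and `ν = a (c + r b) - μ`, times the chirp
value at `b`. Since `Re w = 1 > 0`, the Gaussian integral `∫ exp (β τ² + γ τ) = (π / -β)^{1/2} exp (-γ² / 4β)`
applies; its principal root splits as `σ √(2π) / w^{1/2}` because `w` is off the negative real axis,
and `1 / w = (1 + 2πiσ²a²r) / (1 + (2πra²σ²)²)` separates the exponent into its modulus and phase.
-/

open Real Complex MeasureTheory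

namespace Complex

theorem ofReal_mul_cpow {p : ℝ} (hp : 0 < p) {z : ℂ} (hz : z ≠ 0) (s : ℂ) :
    ((p : ℂ) * z) ^ s = (p : ℂ) ^ s * z ^ s := by
  have hp' : (p : ℂ) ≠ 0 := ofReal_ne_zero.2 hp.ne'
  rw [cpow_def_of_ne_zero (mul_ne_zero hp' hz), log_ofReal_mul hp hz, cpow_def_of_ne_zero hp',
    cpow_def_of_ne_zero hz, add_mul, exp_add, ofReal_log hp.le]

theorem ofReal_div_cpow_inv_two {p : ℝ} (hp : 0 < p) {z : ℂ} (hz : z.arg ≠ π) :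
    ((p : ℂ) / z) ^ (2⁻¹ : ℂ) = (√p : ℂ) / z ^ (2⁻¹ : ℂ) := by
  rcases eq_or_ne z 0 with rfl | hz0
  · simp
  rw [div_eq_mul_inv, ofReal_mul_cpow hp (inv_ne_zero hz0), inv_cpow _ _ hz, Real.sqrt_eq_rpow,
    ofReal_cpow hp.le, div_eq_mul_inv]
  norm_num

end Complex

theorem integral_cexp_complex_gaussian {σ : ℝ} (hσ : 0 < σ) {w : ℂ} (hw : 0 < w.re) (ν : ℂ) :
    ∫ τ : ℝ, cexp (-w / (2 * σ ^ 2) * τ ^ 2 + 2 * π * I * ν * τ) =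
      (σ * √(2 * π) : ℝ) / w ^ (2⁻¹ : ℂ) * cexp (-2 * π ^ 2 * σ ^ 2 * ν ^ 2 / w) := by
  have hre : (-w / (2 * σ ^ 2)).re < 0 := by
    rw [neg_div, neg_re, ← ofReal_ofNat, ← ofReal_pow, ← ofReal_mul, div_ofReal_re]
    have : 0 < w.re / (2 * σ ^ 2) := by positivity
    linarith
  have hroot : ((π : ℂ) / -(-w / (2 * σ ^ 2))) ^ (1 / 2 : ℂ) =
      (σ * √(2 * π) : ℝ) / w ^ (2⁻¹ : ℂ) := by
    have hquot : (π : ℂ) / -(-w / (2 * σ ^ 2)) = ((2 * π * σ ^ 2 : ℝ) : ℂ) / w := by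
      push_cast
      field_simp
    rw [hquot, one_div, ofReal_div_cpow_inv_two (by positivity) (by simp [arg_eq_pi_iff, hw.not_gt]),
      Real.sqrt_mul' _ (by positivity), Real.sqrt_sq hσ.le, mul_comm σ]
  have hquadratic := integral_cexp_quadratic hre (2 * π * I * ν) 0
  simp only [add_zero, zero_sub] at hquadratic
  rw [hquadratic, hroot]
  congr 2
  field_simp
  ring_nf
  simp only [I_sq]
  ring

theorem cexp_chirp_mul_morlet (c r b μ a σ τ : ℝ) (hσ : σ ≠ 0) :
    cexp (2 * π * I * (c * (b + a * τ : ℝ) + r / 2 * ((b + a * τ : ℝ) : ℂ) ^ 2)) *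
        cexp (-(τ : ℂ) ^ 2 / (2 * (σ : ℂ) ^ 2)) * cexp (-2 * π * I * μ * τ) =
      cexp (2 * π * I * (c * b + r / 2 * b ^ 2)) *
        cexp (-(1 - 2 * π * I * σ ^ 2 * a ^ 2 * r) / (2 * σ ^ 2) * τ ^ 2 +
          2 * π * I * (a * (c + r * b) - μ) * τ) := by
  have hσ' : (σ : ℂ) ≠ 0 := ofReal_ne_zero.2 hσ
  simp only [← Complex.exp_add]
  congr 1
  push_cast
  field_simp
  ring

theorem chirp_morlet_exponent_eq (c r b μ a σ : ℝ) (ha : a ≠ 0) :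
    -2 * π ^ 2 * σ ^ 2 * ((a : ℂ) * (c + r * b) - μ) ^ 2 / (1 - 2 * π * I * σ ^ 2 * a ^ 2 * r) =
      -(((2 * π ^ 2 * (a * σ) ^ 2 / (1 + (2 * π * r * a ^ 2 * σ ^ 2) ^ 2) : ℝ)) : ℂ) *
        ((c : ℂ) + r * b - μ / a) ^ 2 * (1 + 2 * π * I * a ^ 2 * σ ^ 2 * r) := by
  have ha' : (a : ℂ) ≠ 0 := ofReal_ne_zero.2 ha
  have hden : (1 + (2 * π * r * a ^ 2 * σ ^ 2) ^ 2 : ℝ) ≠ 0 := by positivity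
  have hconj : (1 - 2 * π * I * σ ^ 2 * a ^ 2 * r) * (1 + 2 * π * I * a ^ 2 * σ ^ 2 * r) =
      ((1 + (2 * π * r * a ^ 2 * σ ^ 2) ^ 2 : ℝ) : ℂ) := by
    push_cast
    ring_nf
    rw [I_sq]
    ring
  have hw : (1 - 2 * π * I * σ ^ 2 * a ^ 2 * r : ℂ) ≠ 0 :=
    left_ne_zero_of_mul (by rw [hconj]; exact ofReal_ne_zero.2 hden)
  rw [div_eq_iff hw]
  calc -2 * π ^ 2 * σ ^ 2 * ((a : ℂ) * (c + r * b) - μ) ^ 2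
      = -(((2 * π ^ 2 * (a * σ) ^ 2 / (1 + (2 * π * r * a ^ 2 * σ ^ 2) ^ 2) : ℝ) : ℂ) *
          ((1 + (2 * π * r * a ^ 2 * σ ^ 2) ^ 2 : ℝ) : ℂ)) * ((c : ℂ) + r * b - μ / a) ^ 2 := by
        rw [ofReal_div, div_mul_cancel₀ _ (ofReal_ne_zero.2 hden)]
        push_cast
        field_simp
    _ = _ := by
        rw [← hconj]
        ring

/-- CWT of a linear chirp with the simplified Morlet wavelet (Proposition 2). -/
theorem cwt_linear_chirp_morlet
    (A : ℂ) (c r b μ : ℝ) (a σ : ℝ) (ha : 0 < a) (hσ : 0 < σ)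
    (s : ℝ → ℂ)
    (hs : ∀ t : ℝ, s t = A * Complex.exp (2 * π * Complex.I * (c * t + r / 2 * t ^ 2))) :
    (∫ τ : ℝ, s (b + a * τ) * ((1 / (σ * Real.sqrt (2 * π)) : ℝ) : ℂ) *
        Complex.exp (-(τ : ℂ) ^ 2 / (2 * (σ : ℂ) ^ 2)) * Complex.exp (-2 * π * Complex.I * μ * τ)) =
      A / (1 - 2 * π * Complex.I * σ ^ 2 * a ^ 2 * r) ^ (1 / 2 : ℂ) *
        Complex.exp (2 * π * Complex.I * (c * b + r / 2 * b ^ 2)) *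
        Complex.exp (-(((2 * π ^ 2 * (a * σ) ^ 2 / (1 + (2 * π * r * a ^ 2 * σ ^ 2) ^ 2) : ℝ)) : ℂ) *
          ((c : ℂ) + r * b - μ / a) ^ 2 * (1 + 2 * π * Complex.I * a ^ 2 * σ ^ 2 * r)) := by
  have hw : 0 < (1 - 2 * π * I * σ ^ 2 * a ^ 2 * r : ℂ).re := by simp [← ofReal_pow]
  have hintegrand : ∀ τ : ℝ, s (b + a * τ) * ((1 / (σ * √(2 * π)) : ℝ) : ℂ) *
        cexp (-(τ : ℂ) ^ 2 / (2 * (σ : ℂ) ^ 2)) * cexp (-2 * π * I * μ * τ) =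
      A * ((1 / (σ * √(2 * π)) : ℝ) : ℂ) * cexp (2 * π * I * (c * b + r / 2 * b ^ 2)) *
        cexp (-(1 - 2 * π * I * σ ^ 2 * a ^ 2 * r) / (2 * σ ^ 2) * τ ^ 2 +
          2 * π * I * (a * (c + r * b) - μ) * τ) := fun τ => by
    rw [hs]
    linear_combination (A * ((1 / (σ * √(2 * π)) : ℝ) : ℂ)) *
      cexp_chirp_mul_morlet c r b μ a σ τ hσ.ne'
  have hnorm : ((σ * √(2 * π) : ℝ) : ℂ) ≠ 0 := ofReal_ne_zero.2 (by positivity)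
  rw [integral_congr_ae (.of_forall hintegrand), integral_const_mul,
    integral_cexp_complex_gaussian hσ hw, chirp_morlet_exponent_eq c r b μ a σ ha.ne', one_div (2 : ℂ),
    ofReal_div, ofReal_one]
  field_simp
end

section
/- Let A ∈ ℂ, c, r, b, μ ∈ ℝ and a, σ > 0, and let s(t) = A e^{2πi(ct + (r/2)t²)}. Then the modulus of the Morlet-wavelet CWT W_s(a, b) = ∫_ℝ s(b + aτ) (1/(σ√(2π))) e^{−τ²/(2σ²)} e^{−2πiμτ} dτ satisfies |W_s(a, b)| = |A| · (1 + (2πσ²a²r)²)^{−1/4} · exp( −(2π²(aσ)² / (1 + (2πr a²σ²)²)) · (c + rb − μ/a)² ). -/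
/-!
Expanding the chirp at `b + aτ`, the integrand is the Gaussian density times `exp (i q(τ))`
for a real quadratic `q`, so the transform is a complex Gaussian integral
`∫ exp (w τ² + C τ + d) = (π / -w) ^ (1/2) * exp (d - C² / (4w))` with `Re w < 0`. Its modulus is
`(π / ‖w‖) ^ (1/2) * exp (Re (d - C² / (4w)))`, and for `w = -(1 - 2iσ²β) / (2σ²)` both factors
are explicit: `‖w‖ = √(1 + (2σ²β)²) / (2σ²)`, and only the imaginary linear coefficient `C = iγ`
contributes to the real part of the exponent.
-/

open Real Complex MeasureTheory

theorem norm_integral_cexp_quadratic {b : ℂ} (hb : b.re < 0) (c d : ℂ) :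
    ‖∫ x : ℝ, cexp (b * x ^ 2 + c * x + d)‖ =
      (π / ‖b‖) ^ (1 / 2 : ℝ) * rexp (d - c ^ 2 / (4 * b)).re := by
  rw [integral_cexp_quadratic hb, norm_mul, Complex.norm_exp,
    show (1 / 2 : ℂ) = ((1 / 2 : ℝ) : ℂ) by push_cast; ring, norm_cpow_real, norm_div, norm_neg,
    Complex.norm_real, Real.norm_of_nonneg pi_pos.le]

theorem norm_integral_gaussian_mul_cexp_quadratic_phase {σ : ℝ} (hσ : 0 < σ) (β γ θ : ℝ) :
    ‖∫ x : ℝ, ((1 / (σ * √(2 * π)) : ℝ) : ℂ) *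
        cexp (-(x : ℂ) ^ 2 / (2 * σ ^ 2) + (β * x ^ 2 + γ * x + θ) * I)‖ =
      (1 + (2 * σ ^ 2 * β) ^ 2) ^ (-(1 / 4) : ℝ) *
        rexp (-(σ ^ 2 * γ ^ 2 / (2 * (1 + (2 * σ ^ 2 * β) ^ 2)))) := by
  obtain ⟨w, hw⟩ : ∃ w : ℂ, w = ((-(1 / (2 * σ ^ 2)) : ℝ) : ℂ) + β * I := ⟨_, rfl⟩
  have hw_re : w.re = -(1 / (2 * σ ^ 2)) := by
    rw [hw, add_re, ofReal_re, re_ofReal_mul, I_re, mul_zero, add_zero]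
  have hphase (x : ℝ) : -(x : ℂ) ^ 2 / (2 * σ ^ 2) + (β * x ^ 2 + γ * x + θ) * I =
      w * x ^ 2 + (γ * I) * x + θ * I := by
    rw [hw]; push_cast; ring
  set k := 2 * σ ^ 2 * β
  have hw_normSq : normSq w = (1 + k ^ 2) / (2 * σ ^ 2) ^ 2 := by
    rw [hw, normSq_add_mul_I]
    field_simp
    ring
  have hw_norm : ‖w‖ = √(1 + k ^ 2) / (2 * σ ^ 2) := by
    rw [norm_def, hw_normSq, Real.sqrt_div' _ (by positivity), Real.sqrt_sq (by positivity)]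
  have hprefactor : (π / ‖w‖) ^ (1 / 2 : ℝ) = σ * √(2 * π) * (1 + k ^ 2) ^ (-(1 / 4) : ℝ) := by
    have hsq : π / ‖w‖ = (σ * √(2 * π)) ^ 2 * (1 + k ^ 2) ^ (-(1 / 2) : ℝ) := by
      rw [hw_norm, mul_pow σ, sq_sqrt (by positivity), rpow_neg (by positivity), ← sqrt_eq_rpow]
      field_simp
    rw [hsq, mul_rpow (by positivity) (by positivity), ← sqrt_eq_rpow, sqrt_sq (by positivity),
      ← rpow_mul (by positivity)]
    norm_num
  have hexponent : (θ * I - (γ * I) ^ 2 / (4 * w)).re = -(σ ^ 2 * γ ^ 2 / (2 * (1 + k ^ 2))) := by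
    have hsplit : θ * I - (γ * I) ^ 2 / (4 * w) = θ * I + ((γ ^ 2 / 4 : ℝ) : ℂ) * w⁻¹ := by
      push_cast
      linear_combination (-(γ : ℂ) ^ 2 / (4 * w)) * I_sq
    rw [hsplit, add_re, re_ofReal_mul, re_ofReal_mul, I_re, mul_zero, zero_add, inv_re, hw_re,
      hw_normSq]
    field_simp
    ring
  simp_rw [hphase]
  rw [integral_const_mul, norm_mul,
    norm_integral_cexp_quadratic (by rw [hw_re]; exact neg_lt_zero.mpr (by positivity)),
    hexponent, hprefactor, Complex.norm_real, Real.norm_of_nonneg (by positivity)]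
  field_simp

/-- Modulus of the Morlet-wavelet CWT of a linear chirp. -/
theorem cwt_linear_chirp_morlet_abs
    (A : ℂ) (c r b μ : ℝ) (a σ : ℝ) (ha : 0 < a) (hσ : 0 < σ)
    (s : ℝ → ℂ)
    (hs : ∀ t : ℝ, s t = A * Complex.exp (2 * π * Complex.I * (c * t + r / 2 * t ^ 2))) :
    ‖∫ τ : ℝ, s (b + a * τ) * ((1 / (σ * Real.sqrt (2 * π)) : ℝ) : ℂ) *
        Complex.exp (-(τ : ℂ) ^ 2 / (2 * (σ : ℂ) ^ 2)) * Complex.exp (-2 * π * Complex.I * μ * τ)‖ =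
      ‖A‖ * (1 + (2 * π * σ ^ 2 * a ^ 2 * r) ^ 2) ^ (-(1 / 4) : ℝ) *
        Real.exp (-(2 * π ^ 2 * (a * σ) ^ 2 / (1 + (2 * π * r * a ^ 2 * σ ^ 2) ^ 2)) *
          (c + r * b - μ / a) ^ 2) := by
  have hintegrand (τ : ℝ) : s (b + a * τ) * ((1 / (σ * √(2 * π)) : ℝ) : ℂ) *
      cexp (-(τ : ℂ) ^ 2 / (2 * (σ : ℂ) ^ 2)) * cexp (-2 * π * I * μ * τ) =
      A * (((1 / (σ * √(2 * π)) : ℝ) : ℂ) * cexp (-(τ : ℂ) ^ 2 / (2 * σ ^ 2) +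
        ((π * r * a ^ 2 : ℝ) * τ ^ 2 + (2 * π * (a * (c + r * b) - μ) : ℝ) * τ +
          (2 * π * (c * b + r / 2 * b ^ 2) : ℝ)) * I)) := by
    rw [hs, mul_right_comm A, mul_assoc, mul_assoc, mul_assoc, ← Complex.exp_add,
      ← Complex.exp_add]
    congr 3
    push_cast
    ring
  simp_rw [hintegrand]
  rw [integral_const_mul, norm_mul, norm_integral_gaussian_mul_cexp_quadratic_phase hσ, ← mul_assoc]
  congr 3
  · ring
  · rw [show 2 * σ ^ 2 * (π * r * a ^ 2) = 2 * π * r * a ^ 2 * σ ^ 2 by ring]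
    field_simp
end

section
/- Let g : ℝ → ℂ be continuously differentiable and compactly supported, let σ : ℝ → ℝ be differentiable with σ(b) > 0 for all b, let μ ∈ ℝ, and let s(t) = A e^{pt + (q/2)t²} e^{2πi(ct + (r/2)t²)} be an LFM signal with A ∈ ℂ, p, q, c, r ∈ ℝ. Then for every a ∈ ℝ and b ∈ ℝ, the partial derivative in b of the adaptive CWT W̃_s(a, b) exists and satisfies ∂_b W̃_s(a, b) = (p + qb + 2πi(c + rb)) W̃_s(a, b) + (q + 2πir) a σ(b) W̃^{g1}_s(a, b) − (σ'(b)/σ(b)) W̃_s(a, b) − (σ'(b)/σ(b)) W̃^{g2}_s(a, b). -/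
/-!
Freeze the scale: for fixed `a`, the transform `(b, m) ↦ ∫ x (b + a t) (1/m) g (t/m) e^{-2πiμt} dt`
is differentiable at every `m > 0`, by differentiation under the integral sign: the integrand is
`C¹` in `(b, m)` and, for `m` in a bounded range, supported in one compact set of `t`. The adaptive
transform is its composite with `b ↦ (b, σ b)`, so the chain rule only needs `σ` differentiable
(differentiating in `b` directly would need local bounds on `σ'`). The `m`-derivative of
`(1/m) g (t/m)` gives the terms in `W̃` and `W̃^{g2}`. An LFM signal satisfies
`s' = (α + β y) s` with `α = p + 2πic`, `β = q + 2πir`, and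
`α + β (b + a t) = (α + β b) + β a m (t/m)` gives `W̃^{g1}`.
-/

open Real MeasureTheory Metric Set
open scoped Pointwise

theorem integrable_of_continuousOn_uncurry
    {α P E : Type*} [TopologicalSpace α] [T2Space α] [MeasurableSpace α]
    [OpensMeasurableSpace α] {ν : Measure α} [IsFiniteMeasureOnCompacts ν]
    [TopologicalSpace P] [NormedAddCommGroup E]
    {F : P → α → E} {s : Set P} {k : Set α} (hk : IsCompact k)
    (hF : ContinuousOn (Function.uncurry F) (s ×ˢ univ))
    (hsupp : ∀ p ∈ s, ∀ t ∉ k, F p t = 0) {p : P} (hp : p ∈ s) : Integrable (F p) ν :=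
  (hF.comp_continuous (Continuous.prodMk_right p) fun _ => ⟨hp, trivial⟩
    ).integrable_of_hasCompactSupport (HasCompactSupport.intro hk (hsupp p hp))

theorem hasFDerivAt_integral_of_continuousOn_of_isCompact
    {α P E : Type*} [TopologicalSpace α] [T2Space α] [MeasurableSpace α]
    [OpensMeasurableSpace α] {ν : Measure α} [IsFiniteMeasureOnCompacts ν]
    [NormedAddCommGroup P] [NormedSpace ℝ P] [ProperSpace P]
    [NormedAddCommGroup E] [NormedSpace ℝ E]
    {F : P → α → E} {F' : P → α → P →L[ℝ] E} {s : Set P} {k : Set α}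
    (hs : IsOpen s) (hk : IsCompact k)
    (hF : ContinuousOn (Function.uncurry F) (s ×ˢ univ))
    (hF' : ContinuousOn (Function.uncurry F') (s ×ˢ univ))
    (hderiv : ∀ p ∈ s, ∀ t, HasFDerivAt (F · t) (F' p t) p)
    (hsupp : ∀ p ∈ s, ∀ t ∉ k, F p t = 0) {p₀ : P} (hp₀ : p₀ ∈ s) :
    HasFDerivAt (fun p => ∫ t, F p t ∂ν) (∫ t, F' p₀ t ∂ν) p₀ := by
  have hF'supp : ∀ p ∈ s, ∀ t ∉ k, F' p t = 0 := fun p hp t ht =>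
    (hderiv p hp t).unique <| (hasFDerivAt_const 0 p).congr_of_eventuallyEq <|
      Filter.eventually_of_mem (hs.mem_nhds hp) fun p' hp' => hsupp p' hp' t ht
  obtain ⟨δ, hδ, hball⟩ := Metric.isOpen_iff.1 hs p₀ hp₀
  have hK : closedBall p₀ (δ / 2) ×ˢ k ⊆ s ×ˢ univ :=
    prod_mono ((closedBall_subset_ball (half_lt_self hδ)).trans hball) (subset_univ k)
  obtain ⟨C, hC⟩ := ((isCompact_closedBall p₀ (δ / 2)).prod hk).exists_bound_of_continuousOn
    (hF'.mono hK)
  refine hasFDerivAt_integral_of_dominated_of_fderiv_le (bound := k.indicator fun _ => C)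
    (ball_mem_nhds p₀ (half_pos hδ)) ?_ (integrable_of_continuousOn_uncurry hk hF hsupp hp₀)
    (integrable_of_continuousOn_uncurry hk hF' hF'supp hp₀).aestronglyMeasurable ?_ ?_ ?_
  · filter_upwards [hs.mem_nhds hp₀] with p hp
    exact (integrable_of_continuousOn_uncurry hk hF hsupp hp).aestronglyMeasurable
  · refine Filter.Eventually.of_forall fun t p hp => ?_
    have hps : p ∈ s := hball (ball_subset_ball (half_le_self hδ.le) hp)
    by_cases ht : t ∈ k
    · rw [indicator_of_mem ht]
      exact hC (p, t) ⟨ball_subset_closedBall hp, ht⟩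
    · rw [indicator_of_notMem ht, hF'supp p hps t ht, norm_zero]
  · exact (integrable_indicator_iff hk.isClosed.measurableSet).2
      (integrableOn_const hk.measure_lt_top.ne)
  · exact Filter.Eventually.of_forall fun t p hp =>
      hderiv p (hball (ball_subset_ball (half_le_self hδ.le) hp)) t

noncomputable def cwtIntegrand (w : ℝ → ℂ) (μ : ℝ) (x : ℝ → ℂ) (a b m t : ℝ) : ℂ :=
  x (b + a * t) * (1 / (m : ℂ)) * w (t / m) * Complex.exp (-2 * π * Complex.I * μ * t)

/-- `W̃_x(a, b) = cwtAtScale g μ x a b (σ b)`; `W̃^{g1}` and `W̃^{g2}` are the same transform with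
the windows `u ↦ u g u` and `u ↦ u g' u` (`cwtAtScale_mul_window`). -/
noncomputable def cwtAtScale (w : ℝ → ℂ) (μ : ℝ) (x : ℝ → ℂ) (a b m : ℝ) : ℂ :=
  ∫ t, cwtIntegrand w μ x a b m t

section
variable {w x : ℝ → ℂ} {μ a b m : ℝ}

theorem continuousOn_cwtIntegrand (hx : Continuous x) (hw : Continuous w) :
    ContinuousOn (Function.uncurry fun (z : ℝ × ℝ) t => cwtIntegrand w μ x a z.1 z.2 t)
      ({z | z.2 ≠ 0} ×ˢ univ) := by
  intro q hq
  have hq2 : q.1.2 ≠ 0 := hq.1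
  refine ContinuousAt.continuousWithinAt ?_
  unfold cwtIntegrand Function.uncurry
  fun_prop (disch := simpa using hq2)

theorem integrable_cwtIntegrand (hx : Continuous x) (hw : Continuous w)
    (hws : HasCompactSupport w) (hm : m ≠ 0) : Integrable (cwtIntegrand w μ x a b m) := by
  refine Continuous.integrable_of_hasCompactSupport (by unfold cwtIntegrand; fun_prop) ?_
  have : HasCompactSupport fun t : ℝ => w (t / m) := by
    simpa [div_eq_inv_mul] using hws.comp_smul (inv_ne_zero hm)
  exact (this.mul_left (f := fun t => x (b + a * t) * (1 / (m : ℂ)))).mul_right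

theorem cwtIntegrand_eq_zero_of_notMem_mul {S : Set ℝ} {t : ℝ} (hm : m ∈ S) (hm0 : m ≠ 0)
    (ht : t ∉ S * tsupport w) : cwtIntegrand w μ x a b m t = 0 := by
  have : w (t / m) = 0 := by
    by_contra h
    exact ht ⟨m, hm, t / m, subset_tsupport _ h, mul_div_cancel₀ t hm0⟩
  simp [cwtIntegrand, this]

theorem hasDerivAt_dilation {g : ℝ → ℂ} {t : ℝ} (hg : DifferentiableAt ℝ g (t / m)) (hm : m ≠ 0) :
    HasDerivAt (fun m' : ℝ => 1 / (m' : ℂ) * g (t / m'))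
      (-(1 / (m : ℂ)) * (1 / (m : ℂ) * g (t / m) + 1 / (m : ℂ) * ((t / m : ℝ) * deriv g (t / m))))
      m := by
  have hmC : (m : ℂ) ≠ 0 := by exact_mod_cast hm
  have hinv : HasDerivAt (fun m' : ℝ => 1 / (m' : ℂ)) (-(1 / (m : ℂ) ^ 2)) m := by
    simpa using (hasDerivAt_inv hm).ofReal_comp
  have hquot : HasDerivAt (fun m' : ℝ => t / m') (-t / m ^ 2) m := by
    simpa [div_eq_mul_inv] using (hasDerivAt_inv hm).const_mul t
  refine (hinv.mul (hg.hasDerivAt.scomp m hquot)).congr_deriv ?_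
  simp only [Complex.real_smul, Function.comp_apply]
  push_cast
  field_simp
  ring

theorem hasFDerivAt_cwtIntegrand {g x' : ℝ → ℂ} {t : ℝ}
    (hx : HasDerivAt x (x' (b + a * t)) (b + a * t)) (hg : DifferentiableAt ℝ g (t / m))
    (hm : m ≠ 0) :
    HasFDerivAt (fun z : ℝ × ℝ => cwtIntegrand g μ x a z.1 z.2 t)
      ((ContinuousLinearMap.fst ℝ ℝ ℝ).smulRight (cwtIntegrand g μ x' a b m t) -
        (ContinuousLinearMap.snd ℝ ℝ ℝ).smulRight (1 / (m : ℂ) *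
          (cwtIntegrand g μ x a b m t + cwtIntegrand (fun u => u * deriv g u) μ x a b m t)))
      (b, m) := by
  have hshift : HasDerivAt (fun b' => x (b' + a * t)) (x' (b + a * t)) b :=
    hx.comp_add_const b (a * t)
  have h1 := hshift.hasFDerivAt.comp (f := Prod.fst) (b, m) hasFDerivAt_fst
  have h2 := (hasDerivAt_dilation hg hm).hasFDerivAt.comp (f := Prod.snd) (b, m) hasFDerivAt_snd
  have := (h1.mul h2).mul_const (Complex.exp (-2 * π * Complex.I * μ * t))
  refine (this.congr_fderiv ?_).congr_of_eventuallyEq (.of_forall fun z => ?_)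
  · ext <;> simp [cwtIntegrand] <;> ring
  · simp only [cwtIntegrand, Pi.mul_apply, Function.comp_apply]
    ring

theorem hasFDerivAt_cwtAtScale {g x' : ℝ → ℂ} (hx : ∀ y, HasDerivAt x (x' y) y)
    (hx' : Continuous x') (hg : ContDiff ℝ 1 g) (hgs : HasCompactSupport g) (hm : 0 < m) :
    HasFDerivAt (fun z : ℝ × ℝ => cwtAtScale g μ x a z.1 z.2)
      ((ContinuousLinearMap.fst ℝ ℝ ℝ).smulRight (cwtAtScale g μ x' a b m) -
        (ContinuousLinearMap.snd ℝ ℝ ℝ).smulRight (1 / (m : ℂ) *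
          (cwtAtScale g μ x a b m + cwtAtScale (fun u => u * deriv g u) μ x a b m)))
      (b, m) := by
  set g₁ : ℝ → ℂ := fun u => u * deriv g u
  have hxc : Continuous x := continuous_iff_continuousAt.2 fun y => (hx y).continuousAt
  have hgc : Continuous g := hg.continuous
  have hg₁c : Continuous g₁ := by have := hg.continuous_deriv le_rfl; fun_prop
  have hg₁s : HasCompactSupport g₁ := hgs.deriv.mul_left
  let L₁ := ContinuousLinearMap.smulRightL ℝ (ℝ × ℝ) ℂ (ContinuousLinearMap.fst ℝ ℝ ℝ)
  let L₂ := ContinuousLinearMap.smulRightL ℝ (ℝ × ℝ) ℂ (ContinuousLinearMap.snd ℝ ℝ ℝ)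
  have hscale : univ ×ˢ Ioo 0 (2 * m) ⊆ {z : ℝ × ℝ | z.2 ≠ 0} := fun z hz => hz.2.1.ne'
  have key := hasFDerivAt_integral_of_continuousOn_of_isCompact (ν := volume)
    (F := fun (z : ℝ × ℝ) t => cwtIntegrand g μ x a z.1 z.2 t)
    (F' := fun z t => L₁ (cwtIntegrand g μ x' a z.1 z.2 t) - L₂ (1 / (z.2 : ℂ) *
      (cwtIntegrand g μ x a z.1 z.2 t + cwtIntegrand g₁ μ x a z.1 z.2 t)))
    (isOpen_univ.prod isOpen_Ioo) ((isCompact_Icc (a := 0) (b := 2 * m)).mul hgs)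
    ((continuousOn_cwtIntegrand hxc hgc).mono (prod_mono hscale subset_rfl)) ?_ ?_ ?_
    (p₀ := (b, m)) ⟨trivial, hm, by linarith⟩
  · have hA := integrable_cwtIntegrand (μ := μ) (a := a) (b := b) hx' hgc hgs hm.ne'
    have hC := integrable_cwtIntegrand (μ := μ) (a := a) (b := b) hxc hgc hgs hm.ne'
    have hD := integrable_cwtIntegrand (μ := μ) (a := a) (b := b) hxc hg₁c hg₁s hm.ne'
    have hCD : Integrable fun t =>
        1 / (m : ℂ) * (cwtIntegrand g μ x a b m t + cwtIntegrand g₁ μ x a b m t) :=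
      (hC.add hD).const_mul _
    refine key.congr_fderiv ?_
    rw [integral_sub (L₁.integrable_comp hA) (L₂.integrable_comp hCD),
      L₁.integral_comp_comm hA, L₂.integral_comp_comm hCD, integral_const_mul,
      integral_add hC hD]
    rfl
  · have hinv : ContinuousOn (fun q : (ℝ × ℝ) × ℝ => 1 / (q.1.2 : ℂ))
        ((univ ×ˢ Ioo 0 (2 * m)) ×ˢ univ) :=
      continuousOn_const.div (Complex.continuous_ofReal.comp (by fun_prop)).continuousOn
        fun q hq => by exact_mod_cast hscale hq.1
    refine (L₁.continuous.comp_continuousOn ?_).sub (L₂.continuous.comp_continuousOn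
      (hinv.mul (ContinuousOn.add ?_ ?_)))
    all_goals refine ContinuousOn.mono ?_ (prod_mono hscale subset_rfl)
    exacts [continuousOn_cwtIntegrand hx' hgc, continuousOn_cwtIntegrand hxc hgc,
      continuousOn_cwtIntegrand hxc hg₁c]
  · rintro ⟨b', m'⟩ hp t
    exact hasFDerivAt_cwtIntegrand (hx _) (hg.differentiable one_ne_zero _) hp.2.1.ne'
  · rintro ⟨b', m'⟩ ⟨-, hm'⟩ t
    exact cwtIntegrand_eq_zero_of_notMem_mul (Ioo_subset_Icc_self hm') hm'.1.ne'

theorem hasDerivAt_cwtAtScale_comp {g x' : ℝ → ℂ} {σ : ℝ → ℝ} {σ' : ℝ}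
    (hx : ∀ y, HasDerivAt x (x' y) y) (hx' : Continuous x') (hg : ContDiff ℝ 1 g)
    (hgs : HasCompactSupport g) (hσ : HasDerivAt σ σ' b) (hσb : 0 < σ b) :
    HasDerivAt (fun b' => cwtAtScale g μ x a b' (σ b'))
      (cwtAtScale g μ x' a b (σ b) - σ' / σ b *
        (cwtAtScale g μ x a b (σ b) + cwtAtScale (fun u => u * deriv g u) μ x a b (σ b))) b := by
  refine ((hasFDerivAt_cwtAtScale hx hx' hg hgs hσb).comp_hasDerivAt b
    ((hasDerivAt_id' b).prodMk hσ)).congr_deriv ?_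
  simp only [sub_apply, ContinuousLinearMap.smulRight_apply,
    ContinuousLinearMap.coe_fst', ContinuousLinearMap.coe_snd', Complex.real_smul]
  push_cast
  ring

theorem cwtAtScale_mul_window (w : ℝ → ℂ) :
    cwtAtScale (fun u => u * w u) μ x a b m =
      ∫ t, x (b + a * t) * ((t : ℂ) / (m : ℂ) ^ 2) * w (t / m) *
        Complex.exp (-2 * π * Complex.I * μ * t) := by
  unfold cwtAtScale cwtIntegrand
  congr 1 with t
  push_cast
  ring

theorem cwtAtScale_affine_mul (c₀ c₁ : ℂ) (hx : Continuous x) (hw : Continuous w)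
    (hws : HasCompactSupport w) (hm : m ≠ 0) :
    cwtAtScale w μ (fun y => (c₀ + c₁ * y) * x y) a b m =
      (c₀ + c₁ * b) * cwtAtScale w μ x a b m +
        c₁ * a * m * cwtAtScale (fun u => u * w u) μ x a b m := by
  have hmC : (m : ℂ) ≠ 0 := by exact_mod_cast hm
  unfold cwtAtScale
  rw [← integral_const_mul, ← integral_const_mul,
    ← integral_add ((integrable_cwtIntegrand hx hw hws hm).const_mul _)
      ((integrable_cwtIntegrand (w := fun u => u * w u) hx (by fun_prop) hws.mul_left
        hm).const_mul _)]
  congr 1 with t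
  simp only [cwtIntegrand]
  push_cast
  field_simp
  ring

theorem hasDerivAt_const_mul_cexp_quadratic (A α β : ℂ) (y : ℝ) :
    HasDerivAt (fun t : ℝ => A * Complex.exp (α * t + β / 2 * t ^ 2))
      ((α + β * y) * (A * Complex.exp (α * y + β / 2 * y ^ 2))) y := by
  have hpoly : HasDerivAt (fun t : ℝ => α * t + β / 2 * (t : ℂ) ^ 2) (α + β * y) y := by
    have h := (hasDerivAt_id' y).ofReal_comp
    refine ((h.const_mul α).add ((h.pow 2).const_mul (β / 2))).congr_deriv ?_
    push_cast
    ring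
  refine (hpoly.cexp.const_mul A).congr_deriv ?_
  ring

end

/-- Time derivative of the adaptive CWT of an LFM signal (key identity in the proof of
Theorem 2): `∂_b W̃_s = (p+qb+2πi(c+rb)) W̃_s + (q+2πir) a σ(b) W̃^{g1}_s
− (σ'(b)/σ(b)) W̃_s − (σ'(b)/σ(b)) W̃^{g2}_s`. -/
theorem adaptive_cwt_time_derivative_lfm
    (g : ℝ → ℂ) (hg : ContDiff ℝ 1 g) (hgsupp : HasCompactSupport g)
    (σ : ℝ → ℝ) (hσdiff : Differentiable ℝ σ) (hσpos : ∀ b : ℝ, 0 < σ b)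
    (μ : ℝ) (A : ℂ) (p q c r : ℝ)
    (s : ℝ → ℂ)
    (hs : ∀ t : ℝ, s t = A * Complex.exp (((p * t + q / 2 * t ^ 2 : ℝ) : ℂ)) *
      Complex.exp (2 * π * Complex.I * (c * t + r / 2 * t ^ 2)))
    (W W1 W2 : ℝ → ℝ → ℂ)
    (hW : ∀ a b : ℝ, W a b = ∫ t : ℝ, s (b + a * t) * (1 / (σ b : ℂ)) * g (t / σ b) *
      Complex.exp (-2 * π * Complex.I * μ * t))
    (hW1 : ∀ a b : ℝ, W1 a b = ∫ t : ℝ, s (b + a * t) * ((t : ℂ) / (σ b : ℂ) ^ 2) * g (t / σ b) *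
      Complex.exp (-2 * π * Complex.I * μ * t))
    (hW2 : ∀ a b : ℝ, W2 a b = ∫ t : ℝ, s (b + a * t) * ((t : ℂ) / (σ b : ℂ) ^ 2) *
      deriv g (t / σ b) * Complex.exp (-2 * π * Complex.I * μ * t)) :
    ∀ a b : ℝ, HasDerivAt (fun b' => W a b')
      (((p : ℂ) + q * b + 2 * π * Complex.I * ((c : ℂ) + r * b)) * W a b
        + ((q : ℂ) + 2 * π * Complex.I * r) * a * (σ b : ℂ) * W1 a b
        - (((deriv σ b : ℝ) : ℂ) / (σ b : ℂ)) * W a b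
        - (((deriv σ b : ℝ) : ℂ) / (σ b : ℂ)) * W2 a b) b := by
  intro a b
  set α : ℂ := p + 2 * π * Complex.I * c with hα
  set β : ℂ := q + 2 * π * Complex.I * r with hβ
  have hs_eq : s = fun t : ℝ => A * Complex.exp (α * t + β / 2 * t ^ 2) := by
    funext t
    rw [hs t, mul_assoc, ← Complex.exp_add, hα, hβ]
    push_cast
    ring_nf
  have hsd : ∀ y, HasDerivAt s ((α + β * y) * s y) y := by
    rw [hs_eq]
    exact hasDerivAt_const_mul_cexp_quadratic A α β
  have hsc : Continuous s := continuous_iff_continuousAt.2 fun y => (hsd y).continuousAt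
  have hW' : ∀ b', W a b' = cwtAtScale g μ s a b' (σ b') := hW a
  have hW1' : W1 a b = cwtAtScale (fun u => u * g u) μ s a b (σ b) :=
    (hW1 a b).trans (cwtAtScale_mul_window g).symm
  have hW2' : W2 a b = cwtAtScale (fun u => u * deriv g u) μ s a b (σ b) :=
    (hW2 a b).trans (cwtAtScale_mul_window (deriv g)).symm
  have key := hasDerivAt_cwtAtScale_comp (μ := μ) (a := a) hsd (by fun_prop) hg hgsupp
    (hσdiff b).hasDerivAt (hσpos b)
  rw [cwtAtScale_affine_mul α β hsc hg.continuous hgsupp (hσpos b).ne'] at key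
  simp only [hW', hW1', hW2']
  refine key.congr_deriv ?_
  rw [hα, hβ]
  ring
end

section
/- Let g : ℝ → ℂ be twice continuously differentiable and compactly supported, let σ : ℝ → ℝ be differentiable with σ(b) > 0 for all b, let μ ∈ ℝ, and let x(t) = A e^{pt + (q/2)t²} e^{2πi(ct + (r/2)t²)} be an LFM signal with A ∈ ℂ, p, q, c, r ∈ ℝ. Let (a, b) with a > 0 be a point at which W̃_x(a, b) ≠ 0 and ∂_a ( a W̃^{g1}_x(a, b) / W̃_x(a, b) ) ≠ 0. Define R₀(a, b) = [ ∂_a ( ∂_b W̃_x(a,b) / W̃_x(a,b) ) + (σ'(b)/σ(b)) ∂_a ( W̃^{g2}_x(a,b) / W̃_x(a,b) ) ] / ∂_a ( a W̃^{g1}_x(a,b) / W̃_x(a,b) ), and the second-order adaptive phase transformation ω^{2adp}_x(a, b) = Re( ∂_b W̃_x(a,b) / (2πi W̃_x(a,b)) ) + (σ'(b)/σ(b)) Re( W̃^{g2}_x(a,b) / (2πi W̃_x(a,b)) ) − a Re( ( W̃^{g1}_x(a,b) / (2πi W̃_x(a,b)) ) R₀(a, b) ). Then ω^{2adp}_x(a,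 b) = c + r b, the instantaneous frequency of x at time b. -/
/-!
An LFM signal satisfies `x' = λ x` with `λ(t) = p + 2πi c + κ t` affine, `κ = q + 2πi r`.
Differentiating `W̃_x(a, b)` in `b` under the integral sign, the term with `x'` becomes
`λ(b) W̃ + κ σ(b) a W̃^{g1}` (as `λ(b + a t) = λ(b) + κ a t`), while the dependence of the window
scale on `b` contributes `-(σ'/σ) (W̃ + W̃^{g2})`. Hence `∂_b W̃ / W̃` depends on `a` only through
`κ σ(b) a W̃^{g1}/W̃ - (σ'/σ) W̃^{g2}/W̃`, which gives `R₀ = κ σ(b)`; in `ω^{2adp}` everything but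
`Re(λ(b)/2πi) = c + r b` then cancels.
-/

open Real MeasureTheory Metric Set Filter Topology Pointwise

theorem hasFDerivAt_integral_of_continuousOn_fderiv {E F : Type*}
    [NormedAddCommGroup E] [NormedSpace ℝ E] [NormedAddCommGroup F] [NormedSpace ℝ F]
    {f : E → ℝ → F} {f' : E → ℝ → E →L[ℝ] F} {θ₀ : E} {S : Set E} {K : Set ℝ}
    (hS : IsCompact S) (hSθ₀ : S ∈ 𝓝 θ₀) (hK : IsCompact K)
    (hf : ∀ θ ∈ S, Continuous (f θ)) (hf' : ContinuousOn (Function.uncurry f') (S ×ˢ univ))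
    (hfK : ∀ θ ∈ S, ∀ t ∉ K, f θ t = 0)
    (hderiv : ∀ θ ∈ S, ∀ t, HasFDerivAt (f · t) (f' θ t) θ) :
    HasFDerivAt (fun θ => ∫ t, f θ t) (∫ t, f' θ₀ t) θ₀ := by
  have hθ₀ : θ₀ ∈ S := mem_of_mem_nhds hSθ₀
  have hf'K : ∀ θ ∈ interior S, ∀ t ∉ K, f' θ t = 0 := fun θ hθ t ht =>
    (hderiv θ (interior_subset hθ) t).unique <| (hasFDerivAt_const (0 : F) θ).congr_of_eventuallyEq <|
      eventually_of_mem (isOpen_interior.mem_nhds hθ) fun θ' hθ' => hfK θ' (interior_subset hθ') t ht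
  obtain ⟨C, hC⟩ := (hS.prod hK).exists_bound_of_continuousOn
    (hf'.mono (prod_mono subset_rfl (subset_univ K)))
  refine hasFDerivAt_integral_of_dominated_of_fderiv_le (bound := K.indicator fun _ => C)
    (interior_mem_nhds.2 hSθ₀)
    (eventually_of_mem hSθ₀ fun θ hθ => (hf θ hθ).aestronglyMeasurable)
    ((hf θ₀ hθ₀).integrable_of_hasCompactSupport (HasCompactSupport.intro hK (hfK θ₀ hθ₀)))
    (hf'.comp_continuous (.prodMk_right θ₀) fun t => ⟨hθ₀, mem_univ t⟩).aestronglyMeasurable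
    (Eventually.of_forall fun t θ hθ => ?_)
    ((integrable_indicator_iff hK.measurableSet).2 (integrableOn_const hK.measure_lt_top.ne))
    (Eventually.of_forall fun t θ hθ => hderiv θ (interior_subset hθ) t)
  by_cases ht : t ∈ K
  · simpa [ht] using hC (θ, t) ⟨interior_subset hθ, ht⟩
  · simp [ht, hf'K θ hθ t ht]

noncomputable def adaptiveKernel (h : ℝ → ℂ) (μ s t : ℝ) : ℂ :=
  1 / (s : ℂ) * h (t / s) * Complex.exp (-2 * π * Complex.I * μ * t)

/-- `adaptiveCWT x g σ μ` is the paper's `W̃_x`; `W̃^{g1}_x` and `W̃^{g2}_x` are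
`adaptiveCWT x (fun u => u * g u) σ μ` and `adaptiveCWT x (fun u => u * deriv g u) σ μ`. -/
noncomputable def adaptiveCWT (x h : ℝ → ℂ) (σ : ℝ → ℝ) (μ a b : ℝ) : ℂ :=
  ∫ t : ℝ, x (b + a * t) * adaptiveKernel h μ (σ b) t

theorem adaptiveCWT_eq_integral (x h : ℝ → ℂ) (σ : ℝ → ℝ) (μ a b : ℝ) :
    adaptiveCWT x h σ μ a b = ∫ t : ℝ, x (b + a * t) * (1 / (σ b : ℂ)) * h (t / σ b) *
      Complex.exp (-2 * π * Complex.I * μ * t) := by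
  simp only [adaptiveCWT, adaptiveKernel, mul_assoc]

theorem adaptiveCWT_mul_id_eq_integral (x h : ℝ → ℂ) (σ : ℝ → ℝ) (μ a b : ℝ) :
    adaptiveCWT x (fun u => u * h u) σ μ a b = ∫ t : ℝ, x (b + a * t) *
      ((t : ℂ) / (σ b : ℂ) ^ 2) * h (t / σ b) * Complex.exp (-2 * π * Complex.I * μ * t) := by
  simp only [adaptiveCWT, adaptiveKernel]
  congr 1 with t
  push_cast
  ring

section AdaptiveKernel

variable {h : ℝ → ℂ} {μ : ℝ}

theorem continuous_adaptiveKernel (hh : Continuous h) (s : ℝ) :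
    Continuous (adaptiveKernel h μ s) := by
  unfold adaptiveKernel; fun_prop

theorem ContinuousOn.adaptiveKernel {α : Type*} [TopologicalSpace α] {f g : α → ℝ} {s : Set α}
    (hh : Continuous h) (hf : ContinuousOn f s) (hg : ContinuousOn g s) (hf0 : ∀ z ∈ s, f z ≠ 0) :
    ContinuousOn (fun z => adaptiveKernel h μ (f z) (g z)) s := by
  have hf0' : ∀ z ∈ s, (f z : ℂ) ≠ 0 := fun z hz => Complex.ofReal_ne_zero.2 (hf0 z hz)
  unfold _root_.adaptiveKernel
  fun_prop (disch := assumption)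

theorem adaptiveKernel_eq_zero {T : Set ℝ} {s t : ℝ} (hs : s ∈ T)
    (ht : t ∉ tsupport h * T) : adaptiveKernel h μ s t = 0 := by
  rcases eq_or_ne s 0 with rfl | hs0
  · simp [adaptiveKernel]
  have : h (t / s) = 0 := image_eq_zero_of_notMem_tsupport fun hts =>
    ht (div_mul_cancel₀ t hs0 ▸ mul_mem_mul hts hs)
  simp [adaptiveKernel, this]

theorem hasCompactSupport_adaptiveKernel (hh : HasCompactSupport h) (s : ℝ) :
    HasCompactSupport (adaptiveKernel h μ s) :=
  .intro (hh.mul isCompact_singleton) fun _ ht =>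
    adaptiveKernel_eq_zero (mem_singleton s) ht

theorem mul_adaptiveKernel (s t : ℝ) :
    t * adaptiveKernel h μ s t = s * adaptiveKernel (fun u => u * h u) μ s t := by
  simp only [adaptiveKernel]
  push_cast
  field_simp

theorem hasDerivAt_adaptiveKernel_scale (hh : Differentiable ℝ h) {s : ℝ} (hs : s ≠ 0) (t : ℝ) :
    HasDerivAt (adaptiveKernel h μ · t)
      (-(1 / (s : ℂ)) * (adaptiveKernel h μ s t + adaptiveKernel (fun u => u * deriv h u) μ s t)) s := by
  have hinv : HasDerivAt (fun s : ℝ => 1 / (s : ℂ)) (-(1 / (s : ℂ) ^ 2)) s := by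
    simpa using (hasDerivAt_inv (Complex.ofReal_ne_zero.2 hs)).comp_ofReal
  have hdiv : HasDerivAt (fun s : ℝ => h (t / s)) (-(t / s ^ 2) • deriv h (t / s)) s :=
    (hh _).hasDerivAt.scomp s (by simpa [div_eq_mul_inv] using (hasDerivAt_inv hs).const_mul t :
      HasDerivAt (fun s => t / s) _ s)
  refine ((hinv.mul hdiv).mul_const (Complex.exp (-2 * π * Complex.I * μ * t))).congr_deriv ?_
  simp only [adaptiveKernel, Complex.real_smul]
  push_cast
  field_simp
  ring

end AdaptiveKernel

theorem differentiable_adaptiveCWT_scale {x h : ℝ → ℂ} (hx : ContDiff ℝ 1 x) (hh : Continuous h)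
    (hhc : HasCompactSupport h) (σ : ℝ → ℝ) (μ b : ℝ) :
    Differentiable ℝ fun a => adaptiveCWT x h σ μ a b := by
  intro a₀
  have hk := continuous_adaptiveKernel (μ := μ) hh (σ b)
  have hxc := hx.continuous
  have hx'c := hx.continuous_deriv le_rfl
  refine (hasFDerivAt_integral_of_continuousOn_fderiv
    (f := fun a t => x (b + a * t) * adaptiveKernel h μ (σ b) t)
    (f' := fun a t => (t * deriv x (b + a * t) * adaptiveKernel h μ (σ b) t) • Complex.ofRealCLM)
    (isCompact_closedBall a₀ 1) (closedBall_mem_nhds a₀ one_pos)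
    (hasCompactSupport_adaptiveKernel (μ := μ) hhc (σ b)) (fun _ _ => by fun_prop)
    (Continuous.continuousOn (by fun_prop)) (fun _ _ t ht => ?_) (fun a _ t => ?_)).differentiableAt
  · simp [image_eq_zero_of_notMem_tsupport ht]
  · have hlin : HasDerivAt (fun a : ℝ => b + a * t) t a := by
      simpa using (hasDerivAt_mul_const t).const_add b
    refine (((hx.differentiable one_ne_zero _).hasDerivAt.scomp a hlin).mul_const
      (adaptiveKernel h μ (σ b) t)).hasFDerivAt.congr_fderiv ?_
    ext
    simp [Complex.real_smul]

theorem integrable_mul_adaptiveKernel {x h : ℝ → ℂ} (hx : Continuous x) (hh : Continuous h)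
    (hhc : HasCompactSupport h) (μ a b s : ℝ) :
    Integrable fun t => x (b + a * t) * adaptiveKernel h μ s t :=
  have := continuous_adaptiveKernel (μ := μ) hh s
  (by fun_prop : Continuous _).integrable_of_hasCompactSupport
    (hasCompactSupport_adaptiveKernel hhc s).mul_left

theorem hasFDerivAt_mul_adaptiveKernel {x h : ℝ → ℂ} (hx : Differentiable ℝ x)
    (hh : Differentiable ℝ h) (μ a t : ℝ) {θ : ℝ × ℝ} (hθ : θ.2 ≠ 0) :
    HasFDerivAt (fun θ : ℝ × ℝ => x (θ.1 + a * t) * adaptiveKernel h μ θ.2 t)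
      ((deriv x (θ.1 + a * t) * adaptiveKernel h μ θ.2 t) •
          (Complex.ofRealCLM ∘L ContinuousLinearMap.fst ℝ ℝ ℝ) +
        (-(1 / (θ.2 : ℂ)) * (x (θ.1 + a * t) * adaptiveKernel h μ θ.2 t +
          x (θ.1 + a * t) * adaptiveKernel (fun u => u * deriv h u) μ θ.2 t)) •
          (Complex.ofRealCLM ∘L ContinuousLinearMap.snd ℝ ℝ ℝ)) θ := by
  have hX : HasFDerivAt (fun θ : ℝ × ℝ => x (θ.1 + a * t))
      (deriv x (θ.1 + a * t) • (Complex.ofRealCLM ∘L ContinuousLinearMap.fst ℝ ℝ ℝ)) θ :=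
    ((hx _).hasDerivAt.hasFDerivAt.comp θ (hasFDerivAt_fst.add_const (a * t))).congr_fderiv
      (by ext <;> simp)
  have hK : HasFDerivAt (fun θ : ℝ × ℝ => adaptiveKernel h μ θ.2 t)
      ((-(1 / (θ.2 : ℂ)) * (adaptiveKernel h μ θ.2 t +
        adaptiveKernel (fun u => u * deriv h u) μ θ.2 t)) •
          (Complex.ofRealCLM ∘L ContinuousLinearMap.snd ℝ ℝ ℝ)) θ :=
    ((hasDerivAt_adaptiveKernel_scale hh hθ t).hasFDerivAt.comp θ hasFDerivAt_snd).congr_fderiv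
      (by ext <;> simp)
  exact (hX.mul hK).congr_fderiv (by ext <;> simp <;> ring)

/-- The scale is a second variable here, so that no continuity of `σ'` is needed in the
time derivative below. -/
theorem hasFDerivAt_integral_mul_adaptiveKernel {x h : ℝ → ℂ} (hx : ContDiff ℝ 1 x)
    (hh : ContDiff ℝ 1 h) (hhc : HasCompactSupport h) (μ a β : ℝ) {s : ℝ} (hs : s ≠ 0) :
    HasFDerivAt (fun θ : ℝ × ℝ => ∫ t, x (θ.1 + a * t) * adaptiveKernel h μ θ.2 t)
      ((∫ t, deriv x (β + a * t) * adaptiveKernel h μ s t) •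
          (Complex.ofRealCLM ∘L ContinuousLinearMap.fst ℝ ℝ ℝ) +
        (-(1 / (s : ℂ)) * ((∫ t, x (β + a * t) * adaptiveKernel h μ s t) +
          ∫ t, x (β + a * t) * adaptiveKernel (fun u => u * deriv h u) μ s t)) •
          (Complex.ofRealCLM ∘L ContinuousLinearMap.snd ℝ ℝ ℝ)) (β, s) := by
  set L₁ := Complex.ofRealCLM ∘L ContinuousLinearMap.fst ℝ ℝ ℝ
  set L₂ := Complex.ofRealCLM ∘L ContinuousLinearMap.snd ℝ ℝ ℝ
  set h' : ℝ → ℂ := fun u => u * deriv h u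
  obtain ⟨ε, hε, hT⟩ := nhds_basis_closedBall.mem_iff.1 (isOpen_ne.mem_nhds hs)
  have hxc := hx.continuous
  have hx'c := hx.continuous_deriv le_rfl
  have hhd := hh.differentiable one_ne_zero
  have hh'c : Continuous h' := by have := hh.continuous_deriv le_rfl; fun_prop
  have hS : ∀ z ∈ (closedBall β ε ×ˢ closedBall s ε) ×ˢ (univ : Set ℝ), z.1.2 ≠ 0 :=
    fun z hz => hT hz.1.2
  have hk : ContinuousOn (fun z : (ℝ × ℝ) × ℝ => adaptiveKernel h μ z.1.2 z.2)
      ((closedBall β ε ×ˢ closedBall s ε) ×ˢ univ) := .adaptiveKernel hh.continuous (by fun_prop) (by fun_prop) hS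
  have hk' : ContinuousOn (fun z : (ℝ × ℝ) × ℝ => adaptiveKernel h' μ z.1.2 z.2)
      ((closedBall β ε ×ˢ closedBall s ε) ×ˢ univ) := .adaptiveKernel hh'c (by fun_prop) (by fun_prop) hS
  have hinv : ContinuousOn (fun z : (ℝ × ℝ) × ℝ => 1 / (z.1.2 : ℂ))
      ((closedBall β ε ×ˢ closedBall s ε) ×ˢ univ) :=
    continuousOn_const.div (by fun_prop) fun z hz => Complex.ofReal_ne_zero.2 (hS z hz)
  have hΦ := hasFDerivAt_integral_of_continuousOn_fderiv
    (f := fun θ t => x (θ.1 + a * t) * adaptiveKernel h μ θ.2 t)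
    (f' := fun θ t => (deriv x (θ.1 + a * t) * adaptiveKernel h μ θ.2 t) • L₁ +
      (-(1 / (θ.2 : ℂ)) * (x (θ.1 + a * t) * adaptiveKernel h μ θ.2 t +
        x (θ.1 + a * t) * adaptiveKernel h' μ θ.2 t)) • L₂)
    ((isCompact_closedBall β ε).prod (isCompact_closedBall s ε))
    (prod_mem_nhds (closedBall_mem_nhds β hε) (closedBall_mem_nhds s hε))
    (hhc.mul (isCompact_closedBall s ε))
    (fun θ _ => by have := continuous_adaptiveKernel (μ := μ) hh.continuous θ.2; fun_prop)
    (by simp only [Function.uncurry_def]; fun_prop)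
    (fun θ hθ t ht => by simp [adaptiveKernel_eq_zero hθ.2 ht])
    fun θ hθ t => ?_
  · have hu := integrable_mul_adaptiveKernel hx'c hh.continuous hhc μ a β s
    have hv₁ := integrable_mul_adaptiveKernel hxc hh.continuous hhc μ a β s
    have hv₂ := integrable_mul_adaptiveKernel hxc hh'c hhc.deriv.mul_left μ a β s
    refine hΦ.congr_fderiv ?_
    dsimp only
    rw [integral_add (hu.smul_const L₁) (((hv₁.fun_add hv₂).const_mul _).smul_const L₂),
      integral_smul_const, integral_smul_const, integral_const_mul, integral_add hv₁ hv₂]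
  · exact hasFDerivAt_mul_adaptiveKernel (hx.differentiable one_ne_zero) hhd μ a t (hT hθ.2)

theorem hasDerivAt_adaptiveCWT_time {x h : ℝ → ℂ} (hx : ContDiff ℝ 1 x) (hh : ContDiff ℝ 1 h)
    (hhc : HasCompactSupport h) {σ : ℝ → ℝ} {b : ℝ} (hσ : DifferentiableAt ℝ σ b) (hσ0 : σ b ≠ 0)
    (μ a : ℝ) :
    HasDerivAt (fun b => adaptiveCWT x h σ μ a b)
      (adaptiveCWT (deriv x) h σ μ a b - ((deriv σ b : ℝ) : ℂ) / σ b *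
        (adaptiveCWT x h σ μ a b + adaptiveCWT x (fun u => u * deriv h u) σ μ a b)) b := by
  refine ((hasFDerivAt_integral_mul_adaptiveKernel hx hh hhc μ a b hσ0).comp_hasDerivAt b
    ((hasDerivAt_id b).prodMk hσ.hasDerivAt)).congr_deriv ?_
  simp [adaptiveCWT]
  ring

theorem adaptiveCWT_deriv_of_deriv_eq_affine_mul {x h : ℝ → ℂ} {α κ : ℂ} (hx : Continuous x)
    (hdx : deriv x = fun t => (α + κ * t) * x t) (hh : Continuous h) (hhc : HasCompactSupport h)
    (σ : ℝ → ℝ) (μ a b : ℝ) :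
    adaptiveCWT (deriv x) h σ μ a b = (α + κ * b) * adaptiveCWT x h σ μ a b +
      κ * (σ b : ℂ) * (a * adaptiveCWT x (fun u => u * h u) σ μ a b) := by
  have hint := integrable_mul_adaptiveKernel hx hh hhc μ a b (σ b)
  have hint' := integrable_mul_adaptiveKernel hx (by fun_prop : Continuous fun u : ℝ => u * h u)
    (hhc.mul_left (f := fun u : ℝ => (u : ℂ))) μ a b (σ b)
  calc adaptiveCWT (deriv x) h σ μ a b
      = ∫ t, (α + κ * b) * (x (b + a * t) * adaptiveKernel h μ (σ b) t) +
          κ * (σ b : ℂ) * a * (x (b + a * t) * adaptiveKernel (fun u => u * h u) μ (σ b) t) := by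
        refine integral_congr_ae (.of_forall fun t => ?_)
        have := mul_adaptiveKernel (h := h) (μ := μ) (σ b) t
        simp only [hdx]
        push_cast
        linear_combination κ * a * x (b + a * t) * this
    _ = _ := by
        rw [integral_add (hint.const_mul _) (hint'.const_mul _), integral_const_mul,
          integral_const_mul]
        simp only [adaptiveCWT]
        ring

theorem deriv_adaptiveCWT_time_of_deriv_eq_affine_mul {x h : ℝ → ℂ} {α κ : ℂ}
    (hx : ContDiff ℝ 1 x) (hdx : deriv x = fun t => (α + κ * t) * x t) (hh : ContDiff ℝ 1 h)
    (hhc : HasCompactSupport h) {σ : ℝ → ℝ} {b : ℝ} (hσ : DifferentiableAt ℝ σ b)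
    (hσ0 : σ b ≠ 0) (μ a : ℝ) :
    deriv (fun b' => adaptiveCWT x h σ μ a b') b =
      (α + κ * b) * adaptiveCWT x h σ μ a b +
        κ * σ b * (a * adaptiveCWT x (fun u => u * h u) σ μ a b) -
        ((deriv σ b / σ b : ℝ) : ℂ) *
          (adaptiveCWT x h σ μ a b + adaptiveCWT x (fun u => u * deriv h u) σ μ a b) := by
  rw [(hasDerivAt_adaptiveCWT_time hx hh hhc hσ hσ0 μ a).deriv,
    adaptiveCWT_deriv_of_deriv_eq_affine_mul hx.continuous hdx hh.continuous hhc]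
  push_cast
  ring

noncomputable def lfmSignal (A : ℂ) (p q c r t : ℝ) : ℂ :=
  A * Complex.exp (((p * t + q / 2 * t ^ 2 : ℝ) : ℂ)) *
    Complex.exp (2 * π * Complex.I * (c * t + r / 2 * t ^ 2))

theorem hasDerivAt_lfmSignal (A : ℂ) (p q c r t : ℝ) :
    HasDerivAt (lfmSignal A p q c r)
      ((p + 2 * π * Complex.I * c + (q + 2 * π * Complex.I * r) * t) * lfmSignal A p q c r t) t := by
  have hquad : ∀ u v : ℝ, HasDerivAt (fun t : ℝ => u * t + v / 2 * t ^ 2) (u + v * t) t := fun u v =>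
    (((hasDerivAt_id t).const_mul u).add ((hasDerivAt_pow 2 t).const_mul (v / 2))).congr_deriv
      (by simp; ring)
  have hphase := ((hquad c r).ofReal_comp.const_mul (2 * π * Complex.I)).cexp
  push_cast at hphase
  refine (((hquad p q).ofReal_comp.cexp.const_mul A).mul hphase).congr_deriv ?_
  simp only [lfmSignal]
  push_cast
  ring

theorem deriv_lfmSignal (A : ℂ) (p q c r : ℝ) :
    deriv (lfmSignal A p q c r) =
      fun t => (p + 2 * π * Complex.I * c + (q + 2 * π * Complex.I * r) * t) * lfmSignal A p q c r t :=
  funext fun t => (hasDerivAt_lfmSignal A p q c r t).deriv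

theorem contDiff_lfmSignal (A : ℂ) (p q c r : ℝ) : ContDiff ℝ 1 (lfmSignal A p q c r) := by
  refine contDiff_one_iff_deriv.2 ⟨fun t => (hasDerivAt_lfmSignal A p q c r t).differentiableAt, ?_⟩
  have : Continuous (lfmSignal A p q c r) := continuous_iff_continuousAt.2 fun t =>
    (hasDerivAt_lfmSignal A p q c r t).continuousAt
  rw [deriv_lfmSignal]
  fun_prop

theorem deriv_div_eq_of_forall_eq {D W W₁ W₂ : ℝ → ℂ} {a : ℝ} {α β ρ : ℂ}
    (hD : ∀ a', D a' = α * W a' + β * (a' * W₁ a') - ρ * (W a' + W₂ a'))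
    (hW : DifferentiableAt ℝ W a) (hW₁ : DifferentiableAt ℝ W₁ a) (hW₂ : DifferentiableAt ℝ W₂ a)
    (hW0 : W a ≠ 0) :
    deriv (fun a' => D a' / W a') a =
      β * deriv (fun a' : ℝ => a' * W₁ a' / W a') a - ρ * deriv (fun a' => W₂ a' / W a') a := by
  have hU : DifferentiableAt ℝ (fun a' : ℝ => a' * W₁ a' / W a') a :=
    ((Complex.ofRealCLM.differentiableAt).mul hW₁).div hW hW0
  have hV : DifferentiableAt ℝ (fun a' => W₂ a' / W a') a := hW₂.div hW hW0
  have hloc : (fun a' => D a' / W a') =ᶠ[𝓝 a]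
      fun a' => (α - ρ) + β * (a' * W₁ a' / W a') - ρ * (W₂ a' / W a') := by
    filter_upwards [hW.continuousAt.eventually_ne hW0] with a' ha'
    rw [hD]
    field_simp
    ring
  rw [hloc.deriv_eq]
  exact (((hasDerivAt_const a (α - ρ)).add (hU.hasDerivAt.const_mul β)).sub
    (hV.hasDerivAt.const_mul ρ)).deriv.trans (by ring)

theorem re_div_two_pi_I_ofReal (x : ℝ) : ((x : ℂ) / (2 * π * Complex.I)).re = 0 := by
  simp [Complex.div_re]

theorem re_phase_correction_cancel {w w₁ w₂ lam κ : ℂ} {ρ a : ℝ} (hw : w ≠ 0) :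
    ((lam * w + κ * (a * w₁) - ρ * (w + w₂)) / (2 * π * Complex.I * w)).re
      + ρ * (w₂ / (2 * π * Complex.I * w)).re - a * (w₁ / (2 * π * Complex.I * w) * κ).re
      = (lam / (2 * π * Complex.I)).re := by
  have h2πI : 2 * π * Complex.I ≠ 0 := by simp [Real.pi_ne_zero]
  have hsplit : (lam * w + κ * (a * w₁) - ρ * (w + w₂)) / (2 * π * Complex.I * w) =
      lam / (2 * π * Complex.I) - ρ / (2 * π * Complex.I) + a * (w₁ / (2 * π * Complex.I * w) * κ)
        - ρ * (w₂ / (2 * π * Complex.I * w)) := by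
    field_simp
    ring
  rw [hsplit]
  simp only [Complex.sub_re, Complex.add_re, Complex.re_ofReal_mul, re_div_two_pi_I_ofReal]
  ring

theorem re_lfmLogDeriv_div_two_pi_I (p q c r b : ℝ) :
    ((p + 2 * π * Complex.I * c + (q + 2 * π * Complex.I * r) * b) / (2 * π * Complex.I)).re
      = c + r * b := by
  have h2πI : 2 * π * Complex.I ≠ 0 := by simp [Real.pi_ne_zero]
  have : ((p + 2 * π * Complex.I * c + (q + 2 * π * Complex.I * r) * b) / (2 * π * Complex.I)) =
      ((p + q * b : ℝ) : ℂ) / (2 * π * Complex.I) + ((c + r * b : ℝ) : ℂ) := by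
    field_simp
    push_cast
    ring
  rw [this, Complex.add_re, re_div_two_pi_I_ofReal, Complex.ofReal_re, zero_add]

theorem second_order_adaptive_phase_transformation_lfm_general
    (g : ℝ → ℂ) (hg : ContDiff ℝ 2 g) (hgsupp : HasCompactSupport g)
    (σ : ℝ → ℝ) (hσdiff : Differentiable ℝ σ) (hσpos : ∀ b : ℝ, 0 < σ b)
    (μ : ℝ) (A : ℂ) (p q c r : ℝ)
    (x : ℝ → ℂ)
    (hx : ∀ t : ℝ, x t = A * Complex.exp (((p * t + q / 2 * t ^ 2 : ℝ) : ℂ)) *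
      Complex.exp (2 * π * Complex.I * (c * t + r / 2 * t ^ 2)))
    (W W1 W2 : ℝ → ℝ → ℂ)
    (hW : ∀ a b : ℝ, W a b = ∫ t : ℝ, x (b + a * t) * (1 / (σ b : ℂ)) * g (t / σ b) *
      Complex.exp (-2 * π * Complex.I * μ * t))
    (hW1 : ∀ a b : ℝ, W1 a b = ∫ t : ℝ, x (b + a * t) * ((t : ℂ) / (σ b : ℂ) ^ 2) * g (t / σ b) *
      Complex.exp (-2 * π * Complex.I * μ * t))
    (hW2 : ∀ a b : ℝ, W2 a b = ∫ t : ℝ, x (b + a * t) * ((t : ℂ) / (σ b : ℂ) ^ 2) *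
      deriv g (t / σ b) * Complex.exp (-2 * π * Complex.I * μ * t))
    (a b : ℝ)
    (hW0 : W a b ≠ 0)
    (hU : deriv (fun a' : ℝ => (a' : ℂ) * W1 a' b / W a' b) a ≠ 0)
    (R0 : ℂ)
    (hR0 : R0 = (deriv (fun a' : ℝ => deriv (fun b' : ℝ => W a' b') b / W a' b) a
        + (((deriv σ b : ℝ) : ℂ) / (σ b : ℂ)) * deriv (fun a' : ℝ => W2 a' b / W a' b) a)
      / deriv (fun a' : ℝ => (a' : ℂ) * W1 a' b / W a' b) a)
    (ω : ℝ)
    (hω : ω = (deriv (fun b' : ℝ => W a b') b / (2 * π * Complex.I * W a b)).re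
      + (deriv σ b / σ b) * (W2 a b / (2 * π * Complex.I * W a b)).re
      - a * (W1 a b / (2 * π * Complex.I * W a b) * R0).re) :
    ω = c + r * b := by
  have hxe : x = lfmSignal A p q c r := funext hx
  have hxd : ContDiff ℝ 1 x := hxe ▸ contDiff_lfmSignal A p q c r
  obtain rfl : W = adaptiveCWT x g σ μ := by ext a b; rw [hW, adaptiveCWT_eq_integral]
  obtain rfl : W1 = adaptiveCWT x (fun u => u * g u) σ μ := by
    ext a b; rw [hW1, adaptiveCWT_mul_id_eq_integral]
  obtain rfl : W2 = adaptiveCWT x (fun u => u * deriv g u) σ μ := by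
    ext a b; rw [hW2, adaptiveCWT_mul_id_eq_integral]
  have hg₁ : ContDiff ℝ 1 g := hg.of_le (by norm_num)
  have htime a' := deriv_adaptiveCWT_time_of_deriv_eq_affine_mul hxd
    (hxe ▸ deriv_lfmSignal A p q c r) hg₁ hgsupp (hσdiff b) (hσpos b).ne' μ a'
  have hscale {h : ℝ → ℂ} (hh : Continuous h) (hhc : HasCompactSupport h) :
      DifferentiableAt ℝ (fun a' => adaptiveCWT x h σ μ a' b) a :=
    differentiable_adaptiveCWT_scale hxd hh hhc σ μ b a
  have hR0' : R0 = (q + 2 * π * Complex.I * r) * σ b := by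
    have hσ0 : (σ b : ℂ) ≠ 0 := Complex.ofReal_ne_zero.2 (hσpos b).ne'
    rw [hR0, deriv_div_eq_of_forall_eq htime (hscale hg.continuous hgsupp)
      (hscale (by fun_prop) (hgsupp.mul_left (f := fun u : ℝ => (u : ℂ))))
      (hscale (by have := hg₁.continuous_deriv le_rfl; fun_prop)
        (hgsupp.deriv.mul_left (f := fun u : ℝ => (u : ℂ)))) hW0]
    push_cast
    field_simp
    ring
  rw [hω, hR0', htime, re_phase_correction_cancel hW0, re_lfmLogDeriv_div_two_pi_I]

/-- Theorem 2: for an LFM signal, the second-order adaptive phase transformation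
`ω^{2adp}_x(a,b)` equals the instantaneous frequency `c + rb`. -/
theorem second_order_adaptive_phase_transformation_lfm
    (g : ℝ → ℂ) (hg : ContDiff ℝ 2 g) (hgsupp : HasCompactSupport g)
    (σ : ℝ → ℝ) (hσdiff : Differentiable ℝ σ) (hσpos : ∀ b : ℝ, 0 < σ b)
    (μ : ℝ) (A : ℂ) (p q c r : ℝ)
    (x : ℝ → ℂ)
    (hx : ∀ t : ℝ, x t = A * Complex.exp (((p * t + q / 2 * t ^ 2 : ℝ) : ℂ)) *
      Complex.exp (2 * π * Complex.I * (c * t + r / 2 * t ^ 2)))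
    (W W1 W2 : ℝ → ℝ → ℂ)
    (hW : ∀ a b : ℝ, W a b = ∫ t : ℝ, x (b + a * t) * (1 / (σ b : ℂ)) * g (t / σ b) *
      Complex.exp (-2 * π * Complex.I * μ * t))
    (hW1 : ∀ a b : ℝ, W1 a b = ∫ t : ℝ, x (b + a * t) * ((t : ℂ) / (σ b : ℂ) ^ 2) * g (t / σ b) *
      Complex.exp (-2 * π * Complex.I * μ * t))
    (hW2 : ∀ a b : ℝ, W2 a b = ∫ t : ℝ, x (b + a * t) * ((t : ℂ) / (σ b : ℂ) ^ 2) *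
      deriv g (t / σ b) * Complex.exp (-2 * π * Complex.I * μ * t))
    (a b : ℝ) (ha : 0 < a)
    (hW0 : W a b ≠ 0)
    (hU : deriv (fun a' : ℝ => (a' : ℂ) * W1 a' b / W a' b) a ≠ 0)
    (R0 : ℂ)
    (hR0 : R0 = (deriv (fun a' : ℝ => deriv (fun b' : ℝ => W a' b') b / W a' b) a
        + (((deriv σ b : ℝ) : ℂ) / (σ b : ℂ)) * deriv (fun a' : ℝ => W2 a' b / W a' b) a)
      / deriv (fun a' : ℝ => (a' : ℂ) * W1 a' b / W a' b) a)
    (ω : ℝ)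
    (hω : ω = (deriv (fun b' : ℝ => W a b') b / (2 * π * Complex.I * W a b)).re
      + (deriv σ b / σ b) * (W2 a b / (2 * π * Complex.I * W a b)).re
      - a * (W1 a b / (2 * π * Complex.I * W a b) * R0).re) :
    ω = c + r * b :=
  second_order_adaptive_phase_transformation_lfm_general g hg hgsupp σ hσdiff hσpos μ A p q c r x hx
    W W1 W2 hW hW1 hW2 a b hW0 hU R0 hR0 ω hω
end

section
/- Let ψ : ℝ → ℂ be twice continuously differentiable and compactly supported, and let s(t) = A e^{pt + (q/2)t²} e^{2πi(ct + (r/2)t²)} be an LFM signal with A ∈ ℂ, p, q, c, r ∈ ℝ. Define W_s(a, b) = ∫_ℝ s(b + at) conj(ψ(t)) dt, W^{ψ₁}_s(a, b) = ∫_ℝ s(b + at) t conj(ψ(t)) dt, and U(a, b) = ∂_a ( a W^{ψ₁}_s(a, b) / W_s(a, b) ). At any point (a, b) with a > 0, W_s(a, b) ≠ 0 and U(a, b) ≠ 0, the second-order phase transformation ω^{2nd}_s(a, b) = Re( ∂_b W_s(a,b) / (2πi W_s(a,b)) ) − a Re( ( W^{ψ₁}_s(a,b) / (W_s(a,b) U(a,b))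 ) · ∂_a ( ∂_b W_s(a,b) / (2πi W_s(a,b)) ) ) satisfies ω^{2nd}_s(a, b) = c + r b, the instantaneous frequency of s at time b. -/
/-!
Write the signal as a complex chirp `s t = A exp (L t + M t² / 2)` with `L = p + 2πi c` and
`M = q + 2πi r`. Since `s' t = (L + M t) s t`, differentiating under the integral gives
`∂_b W = (L + M b) W + M a W₁`, so `∂_b W / (2πi W) = (L + M b) / (2πi) + M / (2πi) · a W₁ / W`.
Its `a`-derivative is `M / (2πi) · U`, and the correction term subtracts exactly the part
`a M W₁ / (2πi W)` carried by the second summand, leaving `Re ((L + M b) / (2πi)) = c + r b`.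
-/

open Real MeasureTheory Filter Topology

section ParametricIntegral

variable {f f' g : ℝ → ℂ}

theorem Continuous.integrable_mul_of_hasCompactSupport (hf : Continuous f) (hg : Continuous g)
    (hgc : HasCompactSupport g) : Integrable fun t => f t * g t :=
  (hf.mul hg).integrable_of_hasCompactSupport hgc.mul_left

theorem continuous_integral_comp_add_mul_mul (hf : Continuous f) (hg : Continuous g)
    (hgc : HasCompactSupport g) (b : ℝ) :
    Continuous fun a => ∫ t, f (b + a * t) * g t := by
  rw [← continuousOn_univ]
  refine continuousOn_integral_of_compact_support hgc ?_ fun _ t _ ht => ?_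
  · exact (by fun_prop : Continuous _).continuousOn
  · simp [image_eq_zero_of_notMem_tsupport ht]

theorem hasDerivAt_integral_comp_add_mul_mul (hf : ∀ u, HasDerivAt f (f' u) u)
    (hf' : Continuous f') (hg : Continuous g) (hgc : HasCompactSupport g) (a b : ℝ) :
    HasDerivAt (fun x => ∫ t, f (x + a * t) * g t) (∫ t, f' (b + a * t) * g t) b := by
  have hfc : Continuous f := continuous_iff_continuousAt.2 fun u => (hf u).continuousAt
  obtain ⟨C, hC⟩ := (((isCompact_closedBall b 1).prod hgc).image
    (f := fun x : ℝ × ℝ => x.1 + a * x.2) (by fun_prop)).exists_bound_of_continuousOn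
    hf'.continuousOn
  have hbound : ∀ᵐ t, ∀ x ∈ Metric.ball b 1, ‖f' (x + a * t) * g t‖ ≤ C * ‖g t‖ := by
    refine ae_of_all _ fun t x hx => ?_
    by_cases ht : t ∈ tsupport g
    · rw [norm_mul]
      exact mul_le_mul_of_nonneg_right
        (hC _ ⟨(x, t), ⟨Metric.ball_subset_closedBall hx, ht⟩, rfl⟩) (norm_nonneg _)
    · simp [image_eq_zero_of_notMem_tsupport ht]
  refine (hasDerivAt_integral_of_dominated_loc_of_deriv_le (Metric.ball_mem_nhds b one_pos)
    (Eventually.of_forall fun x => ?_) ?_ ?_ hbound ?_ ?_).2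
  · exact ((hfc.comp (by fun_prop)).mul hg).aestronglyMeasurable
  · exact (hfc.comp (by fun_prop)).integrable_mul_of_hasCompactSupport hg hgc
  · exact ((hf'.comp (by fun_prop)).mul hg).aestronglyMeasurable
  · exact (continuous_const.mul hg.norm).integrable_of_hasCompactSupport hgc.norm.mul_left
  · exact ae_of_all _ fun t x _ => ((hf _).comp_add_const x (a * t)).mul_const (g t)

end ParametricIntegral

section Chirp

/-- A complex chirp `A exp (L t + M t² / 2)`; an LFM signal is the case `L = p + 2πi c`,
`M = q + 2πi r`. -/
noncomputable def chirp (A L M : ℂ) (t : ℝ) : ℂ :=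
  A * Complex.exp (L * t + M / 2 * t ^ 2)

variable (A L M : ℂ)

theorem continuous_chirp : Continuous (chirp A L M) := by
  unfold chirp; fun_prop

theorem hasDerivAt_chirp (t : ℝ) : HasDerivAt (chirp A L M) ((L + M * t) * chirp A L M t) t := by
  have hpoly : HasDerivAt (fun z : ℂ => L * z + M / 2 * z ^ 2) (L + M * t) t :=
    (((hasDerivAt_id _).const_mul L).add ((hasDerivAt_pow 2 _).const_mul (M / 2))).congr_deriv
      (by simp only [mul_one, Nat.cast_ofNat, pow_one, Nat.add_one_sub_one]; ring)
  exact (hpoly.cexp.const_mul A).comp_ofReal.congr_deriv (by rw [chirp]; ring)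

theorem hasDerivAt_integral_chirp_mul {g : ℝ → ℂ} (hg : Continuous g) (hgc : HasCompactSupport g)
    (a b : ℝ) :
    HasDerivAt (fun x => ∫ t, chirp A L M (x + a * t) * g t)
      ((L + M * b) * (∫ t, chirp A L M (b + a * t) * g t)
        + M * a * ∫ t, chirp A L M (b + a * t) * (t : ℂ) * g t) b := by
  have hs : Continuous fun t : ℝ => chirp A L M (b + a * t) :=
    (continuous_chirp A L M).comp (by fun_prop)
  have hs' : Continuous fun u : ℝ => (L + M * u) * chirp A L M u := by
    have := continuous_chirp A L M; fun_prop
  convert hasDerivAt_integral_comp_add_mul_mul (hasDerivAt_chirp A L M) hs' hg hgc a b using 1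
  rw [← integral_const_mul, ← integral_const_mul, ← integral_add]
  · congr 1; ext t; push_cast; ring
  · exact (hs.integrable_mul_of_hasCompactSupport hg hgc).const_mul _
  · exact ((hs.mul Complex.continuous_ofReal).integrable_mul_of_hasCompactSupport hg hgc).const_mul
      _

end Chirp

theorem re_add_two_pi_I_mul_div_two_pi_I (x y : ℝ) :
    (((x : ℂ) + 2 * π * Complex.I * y) / (2 * π * Complex.I)).re = y := by
  have h : (2 * π * Complex.I : ℂ) ≠ 0 := by simp [pi_ne_zero]
  rw [add_div, mul_div_cancel_left₀ _ h, Complex.add_re, Complex.ofReal_re, add_eq_right]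
  simp [Complex.div_re]

theorem re_sub_mul_re_div_mul_deriv_eq {Φ R : ℝ → ℂ} {K N V U : ℂ} {a : ℝ}
    (hΦ : Φ =ᶠ[𝓝 a] fun x => K + N * R x) (hRa : R a = a * V) (hU : deriv R a = U)
    (hU0 : U ≠ 0) :
    (Φ a).re - a * (V / U * deriv Φ a).re = K.re := by
  have hΦa : Φ a = K + a * (N * V) := by rw [hΦ.eq_of_nhds, hRa]; ring
  have hΦ' : V / U * deriv Φ a = N * V := by
    rw [hΦ.deriv_eq, deriv_const_add, deriv_const_mul_field, hU]; field_simp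
  rw [hΦa, hΦ', Complex.add_re, Complex.re_ofReal_mul]
  ring

theorem second_order_phase_transformation_lfm_general
    (ψ : ℝ → ℂ) (hψ : ContDiff ℝ 2 ψ) (hψsupp : HasCompactSupport ψ)
    (A : ℂ) (p q c r : ℝ)
    (s : ℝ → ℂ)
    (hs : ∀ t : ℝ, s t = A * Complex.exp (((p * t + q / 2 * t ^ 2 : ℝ) : ℂ)) *
      Complex.exp (2 * π * Complex.I * (c * t + r / 2 * t ^ 2)))
    (W W1 : ℝ → ℝ → ℂ)
    (hW : ∀ a b : ℝ, W a b = ∫ t : ℝ, s (b + a * t) * starRingEnd ℂ (ψ t))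
    (hW1 : ∀ a b : ℝ, W1 a b = ∫ t : ℝ, s (b + a * t) * (t : ℂ) * starRingEnd ℂ (ψ t))
    (a b : ℝ)
    (hW0 : W a b ≠ 0)
    (U : ℂ)
    (hUdef : U = deriv (fun a' : ℝ => (a' : ℂ) * W1 a' b / W a' b) a)
    (hU : U ≠ 0)
    (ω : ℝ)
    (hω : ω = (deriv (fun b' : ℝ => W a b') b / (2 * π * Complex.I * W a b)).re
      - a * (W1 a b / (W a b * U) *
          deriv (fun a' : ℝ => deriv (fun b' : ℝ => W a' b') b / (2 * π * Complex.I * W a' b)) a).re) :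
    ω = c + r * b := by
  set L : ℂ := p + 2 * π * Complex.I * c with hL
  set M : ℂ := q + 2 * π * Complex.I * r with hM
  obtain rfl : s = chirp A L M := funext fun t => by
    rw [hs, chirp, mul_assoc, ← Complex.exp_add, hL, hM]; congr 2; push_cast; ring
  have hψc : Continuous fun t => starRingEnd ℂ (ψ t) := by
    have := hψ.continuous; fun_prop
  have hψsupp' : HasCompactSupport fun t => starRingEnd ℂ (ψ t) := hψsupp.comp_left (map_zero _)
  have hDb (a' : ℝ) :
      deriv (fun b' => W a' b') b = (L + M * b) * W a' b + M * a' * W1 a' b := by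
    simp only [hW, hW1]
    exact (hasDerivAt_integral_chirp_mul A L M hψc hψsupp' a' b).deriv
  have hWne : ∀ᶠ a' in 𝓝 a, W a' b ≠ 0 := by
    have hWc : Continuous fun a' => W a' b := by
      simp only [hW]
      exact continuous_integral_comp_add_mul_mul (continuous_chirp A L M) hψc hψsupp' b
    exact hWc.continuousAt.eventually_ne hW0
  have hΦ : (fun a' => deriv (fun b' => W a' b') b / (2 * π * Complex.I * W a' b)) =ᶠ[𝓝 a]
      fun a' => (L + M * b) / (2 * π * Complex.I)
        + M / (2 * π * Complex.I) * (a' * W1 a' b / W a' b) := by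
    filter_upwards [hWne] with a' ha'
    rw [hDb]; field_simp
  rw [hω, ← div_div (W1 a b),
    re_sub_mul_re_div_mul_deriv_eq hΦ (mul_div_assoc _ _ _) hUdef.symm hU]
  convert re_add_two_pi_I_mul_div_two_pi_I (p + q * b) (c + r * b) using 3
  push_cast; ring

/-- The second-order phase transformation `ω^{2nd}_s(a,b)` of an LFM signal equals
its instantaneous frequency `c + rb`. -/
theorem second_order_phase_transformation_lfm
    (ψ : ℝ → ℂ) (hψ : ContDiff ℝ 2 ψ) (hψsupp : HasCompactSupport ψ)
    (A : ℂ) (p q c r : ℝ)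
    (s : ℝ → ℂ)
    (hs : ∀ t : ℝ, s t = A * Complex.exp (((p * t + q / 2 * t ^ 2 : ℝ) : ℂ)) *
      Complex.exp (2 * π * Complex.I * (c * t + r / 2 * t ^ 2)))
    (W W1 : ℝ → ℝ → ℂ)
    (hW : ∀ a b : ℝ, W a b = ∫ t : ℝ, s (b + a * t) * starRingEnd ℂ (ψ t))
    (hW1 : ∀ a b : ℝ, W1 a b = ∫ t : ℝ, s (b + a * t) * (t : ℂ) * starRingEnd ℂ (ψ t))
    (a b : ℝ) (ha : 0 < a)
    (hW0 : W a b ≠ 0)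
    (U : ℂ)
    (hUdef : U = deriv (fun a' : ℝ => (a' : ℂ) * W1 a' b / W a' b) a)
    (hU : U ≠ 0)
    (ω : ℝ)
    (hω : ω = (deriv (fun b' : ℝ => W a b') b / (2 * π * Complex.I * W a b)).re
      - a * (W1 a b / (W a b * U) *
          deriv (fun a' : ℝ => deriv (fun b' : ℝ => W a' b') b / (2 * π * Complex.I * W a' b)) a).re) :
    ω = c + r * b :=
  second_order_phase_transformation_lfm_general ψ hψ hψsupp A p q c r s hs W W1 hW hW1 a b hW0 U
    hUdef hU ω hω
end

section
/- Let g : ℝ → ℂ be continuously differentiable and compactly supported, let σ : ℝ → ℝ be differentiable with σ(b) > 0 for all b, let μ ∈ ℝ, and let s(t) = A e^{2πict} be a pure tone with A ∈ ℂ, c ∈ ℝ. Then for all a, b ∈ ℝ, ∂_b W̃_s(a, b) = 2πi c · W̃_s(a, b) − (σ'(b)/σ(b)) W̃_s(a, b) − (σ'(b)/σ(b)) W̃^{g2}_s(a, b). Consequently, at any (a, b) with W̃_s(a, b) ≠ 0, c = ∂_b W̃_s(a,b) / (2πi W̃_s(a,b)) + (σ'(b)/σ(b)) · W̃^{g2}_s(a,b)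 / (2πi W̃_s(a,b)) + σ'(b) / (2πi σ(b)). -/
/-! For a pure tone `s(t) = A e^{2πict}` the substitution `t = σ(b) u` gives, with `ν = μ - c a`,
`W̃_s(a, b) = A e^{2πicb} ĝ(ν σ(b))` and `W̃^{g2}_s(a, b) = A e^{2πicb} (u g')^(ν σ(b))`.
Integration by parts gives `(u g')^(w) = -ĝ(w) - w ĝ'(w)`, so differentiating the first
formula in `b` by the product and chain rules yields the identity for `∂_b W̃_s`; the formula
for `c` is its rearrangement wherever `W̃_s(a, b) ≠ 0`. -/

open Real MeasureTheory FourierTransform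

section

variable {E : Type*} [NormedAddCommGroup E] [NormedSpace ℂ E]

theorem Real.fourier_add {f₁ f₂ : ℝ → E} (h₁ : Integrable f₁) (h₂ : Integrable f₂) (w : ℝ) :
    𝓕 (f₁ + f₂) w = 𝓕 f₁ w + 𝓕 f₂ w := by
  simp only [Real.fourier_eq, Pi.add_apply, smul_add]
  exact integral_add ((fourierIntegral_convergent_iff w).2 h₁)
    ((fourierIntegral_convergent_iff w).2 h₂)

theorem Real.fourier_const_smul (r : ℂ) (f : ℝ → E) : 𝓕 (r • f) = r • 𝓕 f :=
  VectorFourier.fourierIntegral_const_smul _ _ _ _ _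

theorem Real.fourier_comp_div (f : ℝ → E) {σ : ℝ} (hσ : σ ≠ 0) (w : ℝ) :
    𝓕 (fun t => f (t / σ)) w = |σ| • 𝓕 f (σ * w) := by
  simp only [Real.fourier_real_eq_integral_exp_smul]
  rw [← Measure.integral_comp_div _ σ]
  congr 1 with t
  congr 3
  field_simp

theorem HasCompactSupport.integrable_id_smul {g : ℝ → E} (hg : Continuous g)
    (hgsupp : HasCompactSupport g) : Integrable (fun x : ℝ => x • g x) :=
  (continuous_id.smul hg).integrable_of_hasCompactSupport (hgsupp.smul_left (f := id))

theorem HasCompactSupport.hasDerivAt_fourier {g : ℝ → E} (hg : Continuous g)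
    (hgsupp : HasCompactSupport g) (w : ℝ) : HasDerivAt (𝓕 g) (deriv (𝓕 g) w) w :=
  (Real.hasDerivAt_fourier (hg.integrable_of_hasCompactSupport hgsupp)
    (hgsupp.integrable_id_smul hg) w).differentiableAt.hasDerivAt

theorem Real.fourier_smul_deriv {g : ℝ → E} (hg : ContDiff ℝ 1 g) (hgsupp : HasCompactSupport g)
    (w : ℝ) : 𝓕 (fun u : ℝ => u • deriv g u) w = -(w • deriv (𝓕 g) w) - 𝓕 g w := by
  set h : ℝ → E := fun u => u • g u
  have hgc : Continuous g := hg.continuous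
  have hasDerivAt_h (u : ℝ) : HasDerivAt h (u • deriv g u + g u) u :=
    ((hasDerivAt_id u).smul (hg.differentiable one_ne_zero u).hasDerivAt).congr_deriv (by simp)
  have hderiv : deriv h = (fun u : ℝ => u • deriv g u) + g :=
    funext fun u => (hasDerivAt_h u).deriv
  have hgint : Integrable g := hgc.integrable_of_hasCompactSupport hgsupp
  have hhint : Integrable h := hgsupp.integrable_id_smul hgc
  have hug'int : Integrable (fun u : ℝ => u • deriv g u) :=
    hgsupp.deriv.integrable_id_smul (hg.continuous_deriv le_rfl)
  have hh'int : Integrable (deriv h) := hderiv ▸ hug'int.add hgint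
  have fourier_deriv_h : 𝓕 (deriv h) w = (2 * π * Complex.I * w) • 𝓕 h w :=
    congrFun (Real.fourier_deriv hhint (fun u => (hasDerivAt_h u).differentiableAt) hh'int) w
  have deriv_fourier_g : deriv (𝓕 g) w = (-2 * π * Complex.I) • 𝓕 h w := by
    rw [Real.deriv_fourier hgint hhint, show (-2 * π * Complex.I) • 𝓕 h w
      = ((-2 * π * Complex.I) • 𝓕 h) w from rfl, ← Real.fourier_const_smul]
    refine congrArg (fun f : ℝ → E => 𝓕 f w) (funext fun u => ?_)
    simp only [Pi.smul_apply, h, ← Complex.coe_smul, smul_smul]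
  rw [hderiv, Real.fourier_add hug'int hgint] at fourier_deriv_h
  rw [eq_sub_iff_add_eq, fourier_deriv_h, deriv_fourier_g]
  simp only [← Complex.coe_smul, smul_smul]
  module

end

theorem integral_pure_tone_mul_dilation {s : ℝ → ℂ} {A : ℂ} {c : ℝ}
    (hs : ∀ t : ℝ, s t = A * Complex.exp (2 * π * Complex.I * c * t))
    (f : ℝ → ℂ) {σ : ℝ} (hσ : 0 < σ) (a b μ : ℝ) :
    ∫ t : ℝ, s (b + a * t) * (1 / (σ : ℂ)) * f (t / σ) * Complex.exp (-2 * π * Complex.I * μ * t)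
      = A * Complex.exp (2 * π * Complex.I * c * b) * 𝓕 f ((μ - c * a) * σ) := by
  have hσ0 : (σ : ℂ) ≠ 0 := by exact_mod_cast hσ.ne'
  have integrand_eq (t : ℝ) :
      s (b + a * t) * (1 / (σ : ℂ)) * f (t / σ) * Complex.exp (-2 * π * Complex.I * μ * t)
        = A * Complex.exp (2 * π * Complex.I * c * b) / σ *
          (Complex.exp (↑(-2 * π * t * (μ - c * a)) * Complex.I) • f (t / σ)) := by
    have phase : Complex.exp (2 * π * Complex.I * c * ↑(b + a * t))
        * Complex.exp (-2 * π * Complex.I * μ * t)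
        = Complex.exp (2 * π * Complex.I * c * b)
          * Complex.exp (↑(-2 * π * t * (μ - c * a)) * Complex.I) := by
      rw [← Complex.exp_add, ← Complex.exp_add]
      push_cast
      ring_nf
    rw [hs, smul_eq_mul]
    linear_combination A * f (t / σ) / σ * phase
  rw [integral_congr_ae (Filter.Eventually.of_forall integrand_eq), integral_const_mul,
    ← Real.fourier_real_eq_integral_exp_smul (fun t => f (t / σ)), Real.fourier_comp_div f hσ.ne',
    abs_of_pos hσ, Complex.real_smul, mul_comm σ]
  field_simp

theorem integral_pure_tone_mul_dilation_deriv {s : ℝ → ℂ} {A : ℂ} {c : ℝ}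
    (hs : ∀ t : ℝ, s t = A * Complex.exp (2 * π * Complex.I * c * t))
    {g : ℝ → ℂ} (hg : ContDiff ℝ 1 g) (hgsupp : HasCompactSupport g) {σ : ℝ} (hσ : 0 < σ)
    (a b μ : ℝ) :
    ∫ t : ℝ, s (b + a * t) * ((t : ℂ) / (σ : ℂ) ^ 2) * deriv g (t / σ) *
        Complex.exp (-2 * π * Complex.I * μ * t)
      = A * Complex.exp (2 * π * Complex.I * c * b) *
        (-(((μ - c * a) * σ : ℝ) * deriv (𝓕 g) ((μ - c * a) * σ)) - 𝓕 g ((μ - c * a) * σ)) := by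
  have hσ0 : (σ : ℂ) ≠ 0 := by exact_mod_cast hσ.ne'
  rw [← Complex.real_smul, ← Real.fourier_smul_deriv hg hgsupp,
    ← integral_pure_tone_mul_dilation hs _ hσ]
  congr 1 with t
  simp only [Complex.real_smul]
  push_cast
  field_simp

theorem HasDerivAt.pure_tone_mul_comp {F : ℝ → ℂ} {F' : ℂ} {σ : ℝ → ℝ} {σ' ν b : ℝ}
    (hF : HasDerivAt F F' (ν * σ b)) (hσ : HasDerivAt σ σ' b) (A : ℂ) (c : ℝ) :
    HasDerivAt (fun b : ℝ => A * Complex.exp (2 * π * Complex.I * c * b) * F (ν * σ b))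
      (A * Complex.exp (2 * π * Complex.I * c * b) *
        (2 * π * Complex.I * c * F (ν * σ b) + ν * σ' * F')) b := by
  have tone : HasDerivAt (fun b : ℝ => A * Complex.exp (2 * π * Complex.I * c * b))
      (A * (Complex.exp (2 * π * Complex.I * c * b) * (2 * π * Complex.I * c * 1))) b :=
    (((hasDerivAt_id b).ofReal_comp.const_mul (2 * π * Complex.I * c)).cexp).const_mul A
  have envelope : HasDerivAt (fun b => F (ν * σ b)) ((ν * σ') • F') b :=
    hF.scomp b (hσ.const_mul ν)
  refine (tone.mul envelope).congr_deriv ?_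
  rw [Complex.real_smul]
  push_cast
  ring

/-- For a pure tone, the time derivative of the adaptive CWT satisfies
`∂_b W̃_s = 2πic W̃_s − (σ'/σ) W̃_s − (σ'/σ) W̃^{g2}_s`, and consequently the
frequency `c` is recovered by the adaptive phase-transformation formula wherever
`W̃_s(a,b) ≠ 0`. -/
theorem adaptive_cwt_pure_tone_phase
    (g : ℝ → ℂ) (hg : ContDiff ℝ 1 g) (hgsupp : HasCompactSupport g)
    (σ : ℝ → ℝ) (hσdiff : Differentiable ℝ σ) (hσpos : ∀ b : ℝ, 0 < σ b)
    (μ : ℝ) (A : ℂ) (c : ℝ)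
    (s : ℝ → ℂ)
    (hs : ∀ t : ℝ, s t = A * Complex.exp (2 * π * Complex.I * c * t))
    (W W2 : ℝ → ℝ → ℂ)
    (hW : ∀ a b : ℝ, W a b = ∫ t : ℝ, s (b + a * t) * (1 / (σ b : ℂ)) * g (t / σ b) *
      Complex.exp (-2 * π * Complex.I * μ * t))
    (hW2 : ∀ a b : ℝ, W2 a b = ∫ t : ℝ, s (b + a * t) * ((t : ℂ) / (σ b : ℂ) ^ 2) *
      deriv g (t / σ b) * Complex.exp (-2 * π * Complex.I * μ * t)) :
    (∀ a b : ℝ, HasDerivAt (fun b' => W a b')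
      (2 * π * Complex.I * c * W a b
        - (((deriv σ b : ℝ) : ℂ) / (σ b : ℂ)) * W a b
        - (((deriv σ b : ℝ) : ℂ) / (σ b : ℂ)) * W2 a b) b)
    ∧ (∀ a b : ℝ, W a b ≠ 0 →
        (c : ℂ) = deriv (fun b' : ℝ => W a b') b / (2 * π * Complex.I * W a b)
          + (((deriv σ b : ℝ) : ℂ) / (σ b : ℂ)) * (W2 a b / (2 * π * Complex.I * W a b))
          + ((deriv σ b : ℝ) : ℂ) / (2 * π * Complex.I * (σ b : ℂ))) := by
  have hσ0 (b : ℝ) : (σ b : ℂ) ≠ 0 := by exact_mod_cast (hσpos b).ne'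
  have W_eq (a : ℝ) : (fun b => W a b)
      = fun b : ℝ => A * Complex.exp (2 * π * Complex.I * c * b) * 𝓕 g ((μ - c * a) * σ b) :=
    funext fun b => (hW a b).trans (integral_pure_tone_mul_dilation hs g (hσpos b) a b μ)
  have hasDerivAt_W (a b : ℝ) : HasDerivAt (fun b' => W a b')
      (2 * π * Complex.I * c * W a b
        - (((deriv σ b : ℝ) : ℂ) / (σ b : ℂ)) * W a b
        - (((deriv σ b : ℝ) : ℂ) / (σ b : ℂ)) * W2 a b) b := by
    rw [W_eq, hW2, integral_pure_tone_mul_dilation_deriv hs hg hgsupp (hσpos b),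
      congrFun (W_eq a) b]
    refine ((hgsupp.hasDerivAt_fourier hg.continuous _).pure_tone_mul_comp
      (hσdiff b).hasDerivAt A c).congr_deriv ?_
    push_cast
    field_simp [hσ0 b]
    ring
  refine ⟨hasDerivAt_W, fun a b hW0 => ?_⟩
  rw [(hasDerivAt_W a b).deriv]
  field_simp [hσ0 b]
  ring
end

section
/- Let g(t) = (1/√(2π)) e^{−t²/2} be the Gaussian window, σ : ℝ → (0, ∞), μ ∈ ℝ, and let s(t) = A e^{2πict} with A ∈ ℂ, c ∈ ℝ. Then for all a, b ∈ ℝ, W̃^{g2}_s(a, b) = (4π² σ(b)² (ac − μ)² − 1) · W̃_s(a, b), where W̃_s(a, b) = ∫_ℝ s(b + at) (1/σ(b)) g(t/σ(b)) e^{−2πiμt} dt and W̃^{g2}_s(a, b) = ∫_ℝ s(b + at) (t/σ(b)²) g'(t/σ(b)) e^{−2πiμt} dt. -/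
/-!
Against the pure tone, the dilated Gaussian window and the analysing exponential combine into a
single complex Gaussian chirp `E t = exp (-β t² + iθt)` with `β = 1/(2σ²)` and `θ = 2π(ac - μ)`,
so `W̃` is a multiple of `∫ E`. Since `g'(u) = -u g(u)`, the `g2` integrand is `-t²/σ²` times the
`W̃` integrand, so `W̃^{g2}` is a multiple of the second moment `∫ t² E`. Integrating the
derivatives of `E` and of `t E` over `ℝ` (both vanish at infinity) gives
`2β ∫ t E = iθ ∫ E` and `2β ∫ t² E = ∫ E + iθ ∫ t E`, hence
`∫ t² E = (1/(2β) - θ²/(4β²)) ∫ E = (σ² - θ²σ⁴) ∫ E`.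
-/

open Real MeasureTheory Complex

noncomputable def gaussianChirp (b : ℂ) (θ : ℝ) (x : ℝ) : ℂ := cexp (-b * x ^ 2 + θ * I * x)

namespace gaussianChirp

variable (b : ℂ) (θ : ℝ)

theorem hasDerivAt (x : ℝ) :
    HasDerivAt (gaussianChirp b θ) ((θ * I - 2 * b * x) * gaussianChirp b θ x) x := by
  unfold gaussianChirp
  have h : HasDerivAt (fun z : ℂ => cexp (-b * z ^ 2 + θ * I * z))
      (cexp (-b * x ^ 2 + θ * I * x) * (-b * (↑2 * (x : ℂ) ^ (2 - 1)) + θ * I * 1)) x :=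
    (((hasDerivAt_pow 2 (x : ℂ)).const_mul (-b)).add
      ((hasDerivAt_id (x : ℂ)).const_mul (θ * I))).cexp
  convert h.comp_ofReal using 1
  ring

theorem hasDerivAt_pow_mul (n : ℕ) (x : ℝ) :
    HasDerivAt (fun y : ℝ => (y : ℂ) ^ n * gaussianChirp b θ y)
      (n * ((x : ℂ) ^ (n - 1) * gaussianChirp b θ x) + θ * I * ((x : ℂ) ^ n * gaussianChirp b θ x)
        - 2 * b * ((x : ℂ) ^ (n + 1) * gaussianChirp b θ x)) x := by
  refine (((hasDerivAt_pow n (x : ℂ)).comp_ofReal).fun_mul (hasDerivAt b θ x)).congr_deriv ?_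
  ring

theorem norm_eq (x : ℝ) : ‖gaussianChirp b θ x‖ = rexp (-b.re * x ^ 2) := by
  rw [gaussianChirp, norm_exp]
  congr 1
  simp [← ofReal_pow]

variable {b}

theorem integrable_pow_mul (hb : 0 < b.re) (n : ℕ) :
    Integrable (fun x : ℝ => (x : ℂ) ^ n * gaussianChirp b θ x) := by
  have hdom : Integrable (fun x : ℝ => x ^ n * rexp (-b.re * x ^ 2)) := by
    simpa only [Real.rpow_natCast] using
      integrable_rpow_mul_exp_neg_mul_sq hb (s := n) (by linarith [n.cast_nonneg (α := ℝ)])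
  refine hdom.mono (by unfold gaussianChirp; fun_prop) (Filter.Eventually.of_forall fun x => ?_)
  simp [norm_eq]

/-- At `n = 0` the truncated exponent `n - 1` is harmless: that term carries the factor `n`. -/
theorem two_mul_integral_pow_succ_mul (hb : 0 < b.re) (n : ℕ) :
    2 * b * ∫ x : ℝ, (x : ℂ) ^ (n + 1) * gaussianChirp b θ x
      = n * (∫ x : ℝ, (x : ℂ) ^ (n - 1) * gaussianChirp b θ x)
        + θ * I * ∫ x : ℝ, (x : ℂ) ^ n * gaussianChirp b θ x := by
  have hint (k : ℕ) (c : ℂ) := (integrable_pow_mul θ hb k).const_mul c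
  have h := integral_eq_zero_of_hasDerivAt_of_integrable (hasDerivAt_pow_mul b θ n)
    (((hint _ _).add (hint _ _)).sub (hint _ _)) (integrable_pow_mul θ hb n)
  rw [integral_sub, integral_add, integral_const_mul, integral_const_mul,
    integral_const_mul] at h
  · exact (sub_eq_zero.mp h).symm
  all_goals first | exact hint _ _ | exact (hint _ _).add (hint _ _)

theorem integral_sq_mul (hb : 0 < b.re) :
    ∫ x : ℝ, (x : ℂ) ^ 2 * gaussianChirp b θ x
      = (1 / (2 * b) - θ ^ 2 / (4 * b ^ 2)) * ∫ x : ℝ, gaussianChirp b θ x := by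
  have h0 : 2 * b * (∫ x : ℝ, (x : ℂ) * gaussianChirp b θ x)
      = θ * I * ∫ x : ℝ, gaussianChirp b θ x := by
    simpa using two_mul_integral_pow_succ_mul θ hb 0
  have h1 : 2 * b * (∫ x : ℝ, (x : ℂ) ^ 2 * gaussianChirp b θ x)
      = (∫ x : ℝ, gaussianChirp b θ x) + θ * I * ∫ x : ℝ, (x : ℂ) * gaussianChirp b θ x := by
    simpa using two_mul_integral_pow_succ_mul θ hb 1
  have hb0 : b ≠ 0 := by rintro rfl; simp at hb
  field_simp
  linear_combination
    4 * b * h1 + 2 * θ * I * h0 + 2 * θ ^ 2 * (∫ x : ℝ, gaussianChirp b θ x) * I_sq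

end gaussianChirp

theorem gaussianChirp.tone_mul_dilate_mul_cexp (σ a b c μ t : ℝ) :
    cexp (2 * π * I * c * (b + a * t : ℝ)) * gaussianChirp (1 / 2) 0 (t / σ)
        * cexp (-2 * π * I * μ * t)
      = cexp (2 * π * I * c * b) * gaussianChirp ((2 * σ ^ 2)⁻¹ : ℝ) (2 * π * (a * c - μ)) t := by
  simp only [gaussianChirp, ← Complex.exp_add]
  congr 1
  push_cast
  field_simp
  ring

/-- For the Gaussian (Morlet) window and a pure tone,
`W̃^{g2}_s(a,b) = (4π²σ(b)²(ac−μ)² − 1) W̃_s(a,b)`. -/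
theorem adaptive_cwt_gaussian_g2_identity
    (σ : ℝ → ℝ) (hσpos : ∀ b : ℝ, 0 < σ b)
    (μ c : ℝ) (A : ℂ)
    (g : ℝ → ℂ)
    (hg : ∀ t : ℝ, g t = ((1 / Real.sqrt (2 * π) : ℝ) : ℂ) * Complex.exp (-(t : ℂ) ^ 2 / 2))
    (s : ℝ → ℂ)
    (hs : ∀ t : ℝ, s t = A * Complex.exp (2 * π * Complex.I * c * t))
    (W W2 : ℝ → ℝ → ℂ)
    (hW : ∀ a b : ℝ, W a b = ∫ t : ℝ, s (b + a * t) * (1 / (σ b : ℂ)) * g (t / σ b) *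
      Complex.exp (-2 * π * Complex.I * μ * t))
    (hW2 : ∀ a b : ℝ, W2 a b = ∫ t : ℝ, s (b + a * t) * ((t : ℂ) / (σ b : ℂ) ^ 2) *
      deriv g (t / σ b) * Complex.exp (-2 * π * Complex.I * μ * t)) :
    ∀ a b : ℝ, W2 a b = (((4 * π ^ 2 * (σ b) ^ 2 * (a * c - μ) ^ 2 - 1 : ℝ)) : ℂ) * W a b := by
  intro a b
  set K : ℂ := ((1 / Real.sqrt (2 * π) : ℝ) : ℂ)
  have hg_chirp : g = fun t => K * gaussianChirp (1 / 2) 0 t := by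
    ext t
    rw [hg, gaussianChirp, ofReal_zero]
    ring_nf
  have hg_deriv (x : ℝ) : deriv g x = -K * x * gaussianChirp (1 / 2) 0 x := by
    rw [hg_chirp, ((gaussianChirp.hasDerivAt _ _ x).const_mul K).deriv, ofReal_zero]
    ring
  have hσ : σ b ≠ 0 := (hσpos b).ne'
  set β : ℝ := (2 * σ b ^ 2)⁻¹
  set θ : ℝ := 2 * π * (a * c - μ)
  set C : ℂ := A * K * cexp (2 * π * I * c * b)
  have hW_chirp : W a b = C / σ b * ∫ t : ℝ, gaussianChirp β θ t := by
    rw [hW, ← integral_const_mul]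
    refine integral_congr_ae (Filter.Eventually.of_forall fun t => ?_)
    simp only [hs, hg_chirp]
    linear_combination A * K / σ b * gaussianChirp.tone_mul_dilate_mul_cexp (σ b) a b c μ t
  have hW2_chirp : W2 a b = -C / σ b ^ 3 * ∫ t : ℝ, (t : ℂ) ^ 2 * gaussianChirp β θ t := by
    rw [hW2, ← integral_const_mul]
    refine integral_congr_ae (Filter.Eventually.of_forall fun t => ?_)
    simp only [hs, hg_deriv, ofReal_div]
    linear_combination
      -A * K * t ^ 2 / σ b ^ 3 * gaussianChirp.tone_mul_dilate_mul_cexp (σ b) a b c μ t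
  rw [hW2_chirp, gaussianChirp.integral_sq_mul _ (by simp only [ofReal_re]; positivity), hW_chirp]
  simp only [β, θ]
  push_cast
  field_simp
  ring
end
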